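/- arXiv:0908.2048 — 2 statements merged into one kernel-verified Lean document; each statement's English description precedes it below -/
import Mathlib

section
/- For smooth functions X^α (α = 1,…,2n) on ℝ^{2n} whose Poisson bracket matrix is constant, {X^α, X^β} = -J^{αβ}, the cyclic identity 𝔖_{α,β,γ} {X^α, ⟨⟨X^β, X^γ⟩⟩} = 0 holds, where 𝔖 denotes the cyclic sum over (α,β,γ) and ⟨⟨A,B⟩⟩ = -(1/24) D³A·(J⊗J⊗J)·D³B. -/
open Matrix

/-- The standard symplectic `2n × 2n` matrix with blocks `[[0, I], [-I, 0]]`. -/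
noncomputable def stdJ (n : ℕ) : Matrix (Fin n ⊕ Fin n) (Fin n ⊕ Fin n) ℝ :=
  Matrix.fromBlocks 0 1 (-1) 0

/-- The gradient components: `(DA)_α = ∂A/∂X^α`. -/
noncomputable def pgrad {n : ℕ} (A : ((Fin n ⊕ Fin n) → ℝ) → ℝ)
    (x : (Fin n ⊕ Fin n) → ℝ) (α : Fin n ⊕ Fin n) : ℝ :=
  fderiv ℝ A x (Pi.single α 1)

/-- The classical Poisson bracket `{A,B} = (DA)ᵀ J (DB)` on `ℝ^{2n}`. -/
noncomputable def pbracket {n : ℕ} (A B : ((Fin n ⊕ Fin n) → ℝ) → ℝ) :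
    ((Fin n ⊕ Fin n) → ℝ) → ℝ :=
  fun x => ∑ α, ∑ β, pgrad A x α * stdJ n α β * pgrad B x β

/-- Third symmetric differential: `D³A(x)[e_α, e_β, e_γ] = ∂³A/∂X^α∂X^β∂X^γ`. -/
noncomputable def d3 {n : ℕ} (A : ((Fin n ⊕ Fin n) → ℝ) → ℝ)
    (x : (Fin n ⊕ Fin n) → ℝ) (α β γ : Fin n ⊕ Fin n) : ℝ :=
  iteratedFDeriv ℝ 3 A x (fun i => Pi.single (![α, β, γ] i) 1)

/-- The bidifferential operation `⟨⟨A,B⟩⟩ = -(1/24) D³A · (J⊗J⊗J) · D³B`. -/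
noncomputable def ddot {n : ℕ} (A B : ((Fin n ⊕ Fin n) → ℝ) → ℝ) :
    ((Fin n ⊕ Fin n) → ℝ) → ℝ :=
  fun x => -(1/24) * ∑ α', ∑ β', ∑ γ', ∑ α, ∑ β, ∑ γ,
    d3 A x α' β' γ' * stdJ n α' α * stdJ n β' β * stdJ n γ' γ * d3 B x α β γ

namespace CyclicAux
section Alg
variable {I : Type*} [Fintype I]

abbrev W8 (I : Type*) := I × I × I × I × I × I × I × I

/-- swap-coordinates equiv built from an involutive map -/
def mkPerm (g : W8 I → W8 I) (h : ∀ v, g (g v) = v) : W8 I ≃ W8 I := ⟨g, g, h, h⟩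

noncomputable def K1 (J : I → I → ℝ) (u : I → ℝ) (F : I → I → I → I → ℝ)
    (T : I → I → I → ℝ) : ℝ :=
  ∑ v : W8 I, match v with
  | (s, t, d, e, f, a, b, c) =>
    u s * J s t * J d a * J e b * J f c * F t d e f * T a b c

noncomputable def Z1 (J : I → I → ℝ) (T1 : I → I → I → ℝ) (w2 : I → I → ℝ)
    (T3 : I → I → I → ℝ) : ℝ :=
  ∑ v : W8 I, match v with
  | (s, t, d, e, f, a, b, c) =>
    T3 d e f * J d a * J e b * J f c * J s t * T1 b c s * w2 a t

noncomputable def EE8 (J : I → I → ℝ) (u : I → ℝ) (Tj Tk : I → I → I → ℝ)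
    (Fj Fk : I → I → I → I → ℝ) : ℝ :=
  ∑ v : W8 I, match v with
  | (s, t, d, e, f, a, b, c) =>
    u s * J s t * (J d a * J e b * J f c * (Fj t d e f * Tk a b c + Tj d e f * Fk t a b c))


lemma bridge (G : W8 I → ℝ) :
    ∑ v : W8 I, G v = ∑ p : I × I, ∑ q : I × I × I × I × I × I, G (p.1, p.2, q) := by
  simp only [Fintype.sum_prod_type]

lemma EE8_partial (J : I → I → ℝ) (u : I → ℝ) (Tj Tk : I → I → I → ℝ)
    (Fj Fk : I → I → I → I → ℝ) : EE8 J u Tj Tk Fj Fk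
    = ∑ s, ∑ t, ∑ q : I × I × I × I × I × I, (match q with
        | (d, e, f, a, b, c) =>
            u s * J s t * (J d a * J e b * J f c
              * (Fj t d e f * Tk a b c + Tj d e f * Fk t a b c))) := by
  unfold EE8
  simp only [Fintype.sum_prod_type]

section Main

variable (J : I → I → ℝ) (u : Fin 3 → I → ℝ) (w : Fin 3 → I → I → ℝ)
  (T : Fin 3 → I → I → I → ℝ) (F : Fin 3 → I → I → I → I → ℝ)
  (hJ : ∀ a b, J a b = -J b a)
  (hw : ∀ i a b, w i a b = w i b a)
  (hT12 : ∀ i a b c, T i a b c = T i b a c)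
  (hT23 : ∀ i a b c, T i a b c = T i a c b)
  (hF12 : ∀ i a b c d, F i a b c d = F i b a c d)
  (hF23 : ∀ i a b c d, F i a b c d = F i a c b d)
  (hF34 : ∀ i a b c d, F i a b c d = F i a b d c)

set_option linter.unusedSectionVars false in
include J u w T F hJ hw hT12 hT23 hF12 hF23 hF34 in
lemma eSplit (i j k : Fin 3) :
    EE8 J (u i) (T j) (T k) (F j) (F k) = K1 J (u i) (F j) (T k) - K1 J (u i) (F k) (T j) := by
  unfold EE8 K1
  have step : ∀ v : W8 I, (match v with
      | (s, t, d, e, f, a, b, c) =>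
        u i s * J s t * (J d a * J e b * J f c *
          (F j t d e f * T k a b c + T j d e f * F k t a b c)))
      = (match v with
      | (s, t, d, e, f, a, b, c) =>
        u i s * J s t * J d a * J e b * J f c * F j t d e f * T k a b c)
      + (match v with
      | (s, t, d, e, f, a, b, c) =>
        u i s * J s t * J d a * J e b * J f c * T j d e f * F k t a b c) := by
    rintro ⟨s, t, d, e, f, a, b, c⟩; show _ = _ + _; ring
  rw [Finset.sum_congr rfl fun v _ => step v, Finset.sum_add_distrib]
  have h2 : (∑ v : W8 I, match v with
      | (s, t, d, e, f, a, b, c) =>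
        u i s * J s t * J d a * J e b * J f c * T j d e f * F k t a b c)
      = - ∑ v : W8 I, (match v with
      | (s, t, d, e, f, a, b, c) =>
        u i s * J s t * J d a * J e b * J f c * F k t d e f * T j a b c) := by
    rw [← Finset.sum_neg_distrib]
    rw [← Equiv.sum_comp (mkPerm (fun ⟨s, t, d, e, f, a, b, c⟩ => (s, t, a, b, c, d, e, f))
      (fun ⟨s, t, d, e, f, a, b, c⟩ => rfl))]
    refine Finset.sum_congr rfl fun v _ => ?_
    obtain ⟨s, t, d, e, f, a, b, c⟩ := v
    show u i s * J s t * J a d * J b e * J c f * T j a b c * F k t d e f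
        = -(u i s * J s t * J d a * J e b * J f c * F k t d e f * T j a b c)
    rw [hJ a d, hJ b e, hJ c f]; ring
  rw [h2]; ring

set_option linter.unusedSectionVars false in
include J u w T F hJ hw hT12 hT23 hF12 hF23 hF34 in
lemma phiSym (i j k : Fin 3) :
    Z1 J (T i) (w j) (T k) = Z1 J (T k) (w j) (T i) := by
  unfold Z1
  rw [← Equiv.sum_comp (mkPerm (fun ⟨s, t, d, e, f, a, b, c⟩ => (d, a, s, b, c, t, e, f))
    (fun ⟨s, t, d, e, f, a, b, c⟩ => rfl))]
  refine Finset.sum_congr rfl fun v _ => ?_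
  obtain ⟨s, t, d, e, f, a, b, c⟩ := v
  show T k s b c * J s t * J b e * J c f * J d a * T i e f d * w j t a
      = T i d e f * J d a * J e b * J f c * J s t * T k b c s * w j a t
  rw [hT12 k s b c, hT23 k b s c, hT23 i e f d, hT12 i e d f, hw j t a, hJ b e, hJ c f]
  ring

set_option linter.unusedSectionVars false in
include J u w T F hJ hw hT12 hT23 hF12 hF23 hF34 in
lemma contracted (i j k : Fin 3)
    (hR : ∀ a b c : I, ∑ p : I × I,
        (F i a b c p.1 * J p.1 p.2 * u j p.2
       + T i b c p.1 * J p.1 p.2 * w j a p.2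
       + T i a c p.1 * J p.1 p.2 * w j b p.2
       + w i c p.1 * J p.1 p.2 * T j a b p.2
       + T i a b p.1 * J p.1 p.2 * w j c p.2
       + w i b p.1 * J p.1 p.2 * T j a c p.2
       + w i a p.1 * J p.1 p.2 * T j b c p.2
       + u i p.1 * J p.1 p.2 * F j a b c p.2) = 0) :
    K1 J (u j) (F i) (T k) - K1 J (u i) (F j) (T k)
      + 3 * Z1 J (T i) (w j) (T k) - 3 * Z1 J (T j) (w i) (T k) = 0 := by
  have key : (∑ v : W8 I, ((match v with | (s, t, d, e, f, a, b, c) => T k d e f * (J d a * J e b * J f c) * (F i a b c s * J s t * u j t))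
      + (match v with | (s, t, d, e, f, a, b, c) => T k d e f * (J d a * J e b * J f c) * (T i b c s * J s t * w j a t))
      + (match v with | (s, t, d, e, f, a, b, c) => T k d e f * (J d a * J e b * J f c) * (T i a c s * J s t * w j b t))
      + (match v with | (s, t, d, e, f, a, b, c) => T k d e f * (J d a * J e b * J f c) * (w i c s * J s t * T j a b t))
      + (match v with | (s, t, d, e, f, a, b, c) => T k d e f * (J d a * J e b * J f c) * (T i a b s * J s t * w j c t))
      + (match v with | (s, t, d, e, f, a, b, c) => T k d e f * (J d a * J e b * J f c) * (w i b s * J s t * T j a c t))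
      + (match v with | (s, t, d, e, f, a, b, c) => T k d e f * (J d a * J e b * J f c) * (w i a s * J s t * T j b c t))
      + (match v with | (s, t, d, e, f, a, b, c) => T k d e f * (J d a * J e b * J f c) * (u i s * J s t * F j a b c t)))) = 0 := by
    rw [bridge]
    rw [Finset.sum_comm]
    have step : ∀ q : I × I × I × I × I × I, (∑ p : I × I, ((fun (v : W8 I) => ((match v with | (s, t, d, e, f, a, b, c) => T k d e f * (J d a * J e b * J f c) * (F i a b c s * J s t * u j t)) + (match v with | (s, t, d, e, f, a, b, c) => T k d e f * (J d a * J e b * J f c) * (T i b c s * J s t * w j a t)) + (match v with | (s, t, d, e, f, a, b, c) => T k d e f * (J d a * J e b * J f c) * (T i a c s * J s t * w j b t)) + (match v with | (s, t, d, e, f, a, b, c) => T k d e f * (J d a * J e b * J f c) * (w i c s * J s t * T j a b t)) + (match v with | (s, t, d, e, f, a, b, c) => T k d e f * (J d a * J e b * J f c) * (T i a b s * J s t * w j c t)) + (match v with | (s, t, d, e, f, a, b, c) => T k d e f * (J d a * J e b * J f c) * (w i b s * J s t * T j a c t)) + (match v with | (s, t, d, e, f, a, b, c) => T k d e f * (J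 d a * J e b * J f c) * (w i a s * J s t * T j b c t)) + (match v with | (s, t, d, e, f, a, b, c) => T k d e f * (J d a * J e b * J f c) * (u i s * J s t * F j a b c t)))) (p.1, p.2, q)))
        = (match q with | (d, e, f, a, b, c) => (T k d e f * (J d a * J e b * J f c)) * (∑ p : I × I,
          (F i a b c p.1 * J p.1 p.2 * u j p.2
         + T i b c p.1 * J p.1 p.2 * w j a p.2
         + T i a c p.1 * J p.1 p.2 * w j b p.2
         + w i c p.1 * J p.1 p.2 * T j a b p.2
         + T i a b p.1 * J p.1 p.2 * w j c p.2
         + w i b p.1 * J p.1 p.2 * T j a c p.2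
         + w i a p.1 * J p.1 p.2 * T j b c p.2
         + u i p.1 * J p.1 p.2 * F j a b c p.2))) := by
      rintro ⟨d, e, f, a, b, c⟩
      show _ = _ * _
      rw [Finset.mul_sum]
      refine Finset.sum_congr rfl fun p _ => ?_
      obtain ⟨p1, p2⟩ := p
      show _ = _
      ring
    rw [Finset.sum_congr rfl fun q _ => step q]
    refine Finset.sum_eq_zero fun q _ => ?_
    obtain ⟨d, e, f, a, b, c⟩ := q
    show _ * _ = 0
    rw [hR a b c, mul_zero]
  have split : (∑ v : W8 I, ((match v with | (s, t, d, e, f, a, b, c) => T k d e f * (J d a * J e b * J f c) * (F i a b c s * J s t * u j t))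
      + (match v with | (s, t, d, e, f, a, b, c) => T k d e f * (J d a * J e b * J f c) * (T i b c s * J s t * w j a t))
      + (match v with | (s, t, d, e, f, a, b, c) => T k d e f * (J d a * J e b * J f c) * (T i a c s * J s t * w j b t))
      + (match v with | (s, t, d, e, f, a, b, c) => T k d e f * (J d a * J e b * J f c) * (w i c s * J s t * T j a b t))
      + (match v with | (s, t, d, e, f, a, b, c) => T k d e f * (J d a * J e b * J f c) * (T i a b s * J s t * w j c t))
      + (match v with | (s, t, d, e, f, a, b, c) => T k d e f * (J d a * J e b * J f c) * (w i b s * J s t * T j a c t))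
      + (match v with | (s, t, d, e, f, a, b, c) => T k d e f * (J d a * J e b * J f c) * (w i a s * J s t * T j b c t))
      + (match v with | (s, t, d, e, f, a, b, c) => T k d e f * (J d a * J e b * J f c) * (u i s * J s t * F j a b c t))))
      = (∑ v : W8 I, (match v with | (s, t, d, e, f, a, b, c) => T k d e f * (J d a * J e b * J f c) * (F i a b c s * J s t * u j t)))
      + (∑ v : W8 I, (match v with | (s, t, d, e, f, a, b, c) => T k d e f * (J d a * J e b * J f c) * (T i b c s * J s t * w j a t)))
      + (∑ v : W8 I, (match v with | (s, t, d, e, f, a, b, c) => T k d e f * (J d a * J e b * J f c) * (T i a c s * J s t * w j b t)))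
      + (∑ v : W8 I, (match v with | (s, t, d, e, f, a, b, c) => T k d e f * (J d a * J e b * J f c) * (w i c s * J s t * T j a b t)))
      + (∑ v : W8 I, (match v with | (s, t, d, e, f, a, b, c) => T k d e f * (J d a * J e b * J f c) * (T i a b s * J s t * w j c t)))
      + (∑ v : W8 I, (match v with | (s, t, d, e, f, a, b, c) => T k d e f * (J d a * J e b * J f c) * (w i b s * J s t * T j a c t)))
      + (∑ v : W8 I, (match v with | (s, t, d, e, f, a, b, c) => T k d e f * (J d a * J e b * J f c) * (w i a s * J s t * T j b c t)))
      + (∑ v : W8 I, (match v with | (s, t, d, e, f, a, b, c) => T k d e f * (J d a * J e b * J f c) * (u i s * J s t * F j a b c t))) := by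
    simp only [Finset.sum_add_distrib]
  have e1 : (∑ v : W8 I, (match v with | (s, t, d, e, f, a, b, c) => T k d e f * (J d a * J e b * J f c) * (F i a b c s * J s t * u j t))) = K1 J (u j) (F i) (T k) := by
    simp only [K1, Z1]
    rw [← Equiv.sum_comp (mkPerm (fun ⟨s, t, d, e, f, a, b, c⟩ => (t, s, a, b, c, d, e, f))
      (fun ⟨s, t, d, e, f, a, b, c⟩ => rfl))]
    refine Finset.sum_congr rfl fun v _ => ?_
    obtain ⟨s, t, d, e, f, a, b, c⟩ := v
    show T k a b c * (J a d * J b e * J c f) * (F i d e f t * J t s * u j s) = u j s * J s t * J d a * J e b * J f c * F i t d e f * T k a b c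
    rw [hJ a d, hJ b e, hJ c f, hJ t s, hF34 i d e f t, hF23 i d e t f, hF12 i d t e f]
    ring
  have e2 : (∑ v : W8 I, (match v with | (s, t, d, e, f, a, b, c) => T k d e f * (J d a * J e b * J f c) * (T i b c s * J s t * w j a t))) = Z1 J (T i) (w j) (T k) := by
    simp only [K1, Z1]
    refine Finset.sum_congr rfl fun v _ => ?_
    obtain ⟨s, t, d, e, f, a, b, c⟩ := v
    show T k d e f * (J d a * J e b * J f c) * (T i b c s * J s t * w j a t) = T k d e f * J d a * J e b * J f c * J s t * T i b c s * w j a t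
    ring
  have e3 : (∑ v : W8 I, (match v with | (s, t, d, e, f, a, b, c) => T k d e f * (J d a * J e b * J f c) * (T i a c s * J s t * w j b t))) = Z1 J (T i) (w j) (T k) := by
    simp only [K1, Z1]
    rw [← Equiv.sum_comp (mkPerm (fun ⟨s, t, d, e, f, a, b, c⟩ => (s, t, e, d, f, b, a, c))
      (fun ⟨s, t, d, e, f, a, b, c⟩ => rfl))]
    refine Finset.sum_congr rfl fun v _ => ?_
    obtain ⟨s, t, d, e, f, a, b, c⟩ := v
    show T k e d f * (J e b * J d a * J f c) * (T i b c s * J s t * w j a t) = T k d e f * J d a * J e b * J f c * J s t * T i b c s * w j a t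
    rw [hT12 k e d f]
    ring
  have e4 : (∑ v : W8 I, (match v with | (s, t, d, e, f, a, b, c) => T k d e f * (J d a * J e b * J f c) * (w i c s * J s t * T j a b t))) = - Z1 J (T j) (w i) (T k) := by
    simp only [K1, Z1]
    rw [← Finset.sum_neg_distrib]
    rw [← Equiv.sum_comp (mkPerm (fun ⟨s, t, d, e, f, a, b, c⟩ => (t, s, f, e, d, c, b, a))
      (fun ⟨s, t, d, e, f, a, b, c⟩ => rfl))]
    refine Finset.sum_congr rfl fun v _ => ?_
    obtain ⟨s, t, d, e, f, a, b, c⟩ := v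
    show T k f e d * (J f c * J e b * J d a) * (w i a t * J t s * T j c b s) = -(T k d e f * J d a * J e b * J f c * J s t * T j b c s * w i a t)
    rw [hT12 k f e d, hT23 k e f d, hT12 k e d f, hT12 j c b s, hJ t s]
    ring
  have e5 : (∑ v : W8 I, (match v with | (s, t, d, e, f, a, b, c) => T k d e f * (J d a * J e b * J f c) * (T i a b s * J s t * w j c t))) = Z1 J (T i) (w j) (T k) := by
    simp only [K1, Z1]
    rw [← Equiv.sum_comp (mkPerm (fun ⟨s, t, d, e, f, a, b, c⟩ => (s, t, f, e, d, c, b, a))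
      (fun ⟨s, t, d, e, f, a, b, c⟩ => rfl))]
    refine Finset.sum_congr rfl fun v _ => ?_
    obtain ⟨s, t, d, e, f, a, b, c⟩ := v
    show T k f e d * (J f c * J e b * J d a) * (T i c b s * J s t * w j a t) = T k d e f * J d a * J e b * J f c * J s t * T i b c s * w j a t
    rw [hT12 k f e d, hT23 k e f d, hT12 k e d f, hT12 i c b s]
    ring
  have e6 : (∑ v : W8 I, (match v with | (s, t, d, e, f, a, b, c) => T k d e f * (J d a * J e b * J f c) * (w i b s * J s t * T j a c t))) = - Z1 J (T j) (w i) (T k) := by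
    simp only [K1, Z1]
    rw [← Finset.sum_neg_distrib]
    rw [← Equiv.sum_comp (mkPerm (fun ⟨s, t, d, e, f, a, b, c⟩ => (t, s, e, d, f, b, a, c))
      (fun ⟨s, t, d, e, f, a, b, c⟩ => rfl))]
    refine Finset.sum_congr rfl fun v _ => ?_
    obtain ⟨s, t, d, e, f, a, b, c⟩ := v
    show T k e d f * (J e b * J d a * J f c) * (w i a t * J t s * T j b c s) = -(T k d e f * J d a * J e b * J f c * J s t * T j b c s * w i a t)
    rw [hT12 k e d f, hJ t s]
    ring
  have e7 : (∑ v : W8 I, (match v with | (s, t, d, e, f, a, b, c) => T k d e f * (J d a * J e b * J f c) * (w i a s * J s t * T j b c t))) = - Z1 J (T j) (w i) (T k) := by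
    simp only [K1, Z1]
    rw [← Finset.sum_neg_distrib]
    rw [← Equiv.sum_comp (mkPerm (fun ⟨s, t, d, e, f, a, b, c⟩ => (t, s, d, e, f, a, b, c))
      (fun ⟨s, t, d, e, f, a, b, c⟩ => rfl))]
    refine Finset.sum_congr rfl fun v _ => ?_
    obtain ⟨s, t, d, e, f, a, b, c⟩ := v
    show T k d e f * (J d a * J e b * J f c) * (w i a t * J t s * T j b c s) = -(T k d e f * J d a * J e b * J f c * J s t * T j b c s * w i a t)
    rw [hJ t s]
    ring
  have e8 : (∑ v : W8 I, (match v with | (s, t, d, e, f, a, b, c) => T k d e f * (J d a * J e b * J f c) * (u i s * J s t * F j a b c t))) = - K1 J (u i) (F j) (T k) := by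
    simp only [K1, Z1]
    rw [← Finset.sum_neg_distrib]
    rw [← Equiv.sum_comp (mkPerm (fun ⟨s, t, d, e, f, a, b, c⟩ => (s, t, a, b, c, d, e, f))
      (fun ⟨s, t, d, e, f, a, b, c⟩ => rfl))]
    refine Finset.sum_congr rfl fun v _ => ?_
    obtain ⟨s, t, d, e, f, a, b, c⟩ := v
    show T k a b c * (J a d * J b e * J c f) * (u i s * J s t * F j d e f t) = -(u i s * J s t * J d a * J e b * J f c * F j t d e f * T k a b c)
    rw [hJ a d, hJ b e, hJ c f, hF34 j d e f t, hF23 j d e t f, hF12 j d t e f]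
    ring
  linarith [key, split, e1, e2, e3, e4, e5, e6, e7, e8]

set_option linter.unusedSectionVars false in
include J u w T F hJ hw hT12 hT23 hF12 hF23 hF34 in
theorem algebra_main
    (hR : ∀ i j : Fin 3, ∀ a b c : I, ∑ p : I × I,
        (F i a b c p.1 * J p.1 p.2 * u j p.2
       + T i b c p.1 * J p.1 p.2 * w j a p.2
       + T i a c p.1 * J p.1 p.2 * w j b p.2
       + w i c p.1 * J p.1 p.2 * T j a b p.2
       + T i a b p.1 * J p.1 p.2 * w j c p.2
       + w i b p.1 * J p.1 p.2 * T j a c p.2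
       + w i a p.1 * J p.1 p.2 * T j b c p.2
       + u i p.1 * J p.1 p.2 * F j a b c p.2) = 0) :
    EE8 J (u 0) (T 1) (T 2) (F 1) (F 2) + EE8 J (u 1) (T 2) (T 0) (F 2) (F 0)
      + EE8 J (u 2) (T 0) (T 1) (F 0) (F 1) = 0 := by
  have h1 := contracted J u w T F hJ hw hT12 hT23 hF12 hF23 hF34 0 1 2 (hR 0 1)
  have h2 := contracted J u w T F hJ hw hT12 hT23 hF12 hF23 hF34 1 2 0 (hR 1 2)
  have h3 := contracted J u w T F hJ hw hT12 hT23 hF12 hF23 hF34 2 0 1 (hR 2 0)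
  have s1 := phiSym J u w T F hJ hw hT12 hT23 hF12 hF23 hF34 0 1 2
  have s2 := phiSym J u w T F hJ hw hT12 hT23 hF12 hF23 hF34 1 2 0
  have s3 := phiSym J u w T F hJ hw hT12 hT23 hF12 hF23 hF34 2 0 1
  rw [eSplit J u w T F hJ hw hT12 hT23 hF12 hF23 hF34 0 1 2,
      eSplit J u w T F hJ hw hT12 hT23 hF12 hF23 hF34 1 2 0,
      eSplit J u w T F hJ hw hT12 hT23 hF12 hF23 hF34 2 0 1]
  linarith

end Main


end Alg



abbrev In (n : ℕ) := Fin n ⊕ Fin n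
abbrev EEn (n : ℕ) := In n → ℝ
abbrev I2 (n : ℕ) := In n × In n

variable {n : ℕ}

noncomputable def Dv (f : EEn n → ℝ) (v : EEn n) : EEn n → ℝ := fun x => fderiv ℝ f x v

noncomputable def ev (a : In n) : EEn n := Pi.single a 1

noncomputable def P1 (f : EEn n → ℝ) (a : In n) : EEn n → ℝ := Dv f (ev a)
noncomputable def P2 (f : EEn n → ℝ) (a b : In n) : EEn n → ℝ := Dv (P1 f b) (ev a)
noncomputable def P3 (f : EEn n → ℝ) (a b c : In n) : EEn n → ℝ := Dv (P2 f b c) (ev a)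
noncomputable def P4 (f : EEn n → ℝ) (a b c d : In n) : EEn n → ℝ := Dv (P3 f b c d) (ev a)

lemma contDiff_Dv {f : EEn n → ℝ} (hf : ContDiff ℝ (⊤ : ℕ∞) f) (v : EEn n) : ContDiff ℝ (⊤ : ℕ∞) (Dv f v) :=
  (hf.fderiv_right (by simp)).clm_apply contDiff_const

lemma cP1 {f : EEn n → ℝ} (hf : ContDiff ℝ (⊤ : ℕ∞) f) (a : In n) : ContDiff ℝ (⊤ : ℕ∞) (P1 f a) :=
  contDiff_Dv hf _
lemma cP2 {f : EEn n → ℝ} (hf : ContDiff ℝ (⊤ : ℕ∞) f) (a b : In n) : ContDiff ℝ (⊤ : ℕ∞) (P2 f a b) :=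
  contDiff_Dv (cP1 hf b) _
lemma cP3 {f : EEn n → ℝ} (hf : ContDiff ℝ (⊤ : ℕ∞) f) (a b c : In n) : ContDiff ℝ (⊤ : ℕ∞) (P3 f a b c) :=
  contDiff_Dv (cP2 hf b c) _

lemma Dv_comm {f : EEn n → ℝ} (hf : ContDiff ℝ (⊤ : ℕ∞) f) (v w : EEn n) :
    Dv (Dv f v) w = Dv (Dv f w) v := by
  funext x
  have hd : Differentiable ℝ (fderiv ℝ f) := (hf.fderiv_right (m := (⊤ : ℕ∞)) (by simp)).differentiable (by simp)
  have key : ∀ u w : EEn n, Dv (Dv f u) w x = fderiv ℝ (fderiv ℝ f) x w u := by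
    intro u w
    show fderiv ℝ (fun y => fderiv ℝ f y u) x w = _
    rw [fderiv_clm_apply (hd.differentiableAt) (differentiableAt_const u)]
    simp
  rw [key, key, (hf.contDiffAt.isSymmSndFDerivAt (by rw [minSmoothness_of_isRCLikeNormedField]; exact le_trans (by norm_num : (2 : WithTop ℕ∞) ≤ ((2 : ℕ∞) : WithTop ℕ∞)) (WithTop.coe_le_coe.mpr (le_top : (2 : ℕ∞) ≤ ⊤)))).eq]

lemma p2_swap {f : EEn n → ℝ} (hf : ContDiff ℝ (⊤ : ℕ∞) f) (a b : In n) : P2 f a b = P2 f b a :=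
  Dv_comm hf (ev b) (ev a)
lemma p3_swap12 {f : EEn n → ℝ} (hf : ContDiff ℝ (⊤ : ℕ∞) f) (a b c : In n) :
    P3 f a b c = P3 f b a c :=
  Dv_comm (contDiff_Dv hf (ev c)) (ev b) (ev a)
lemma p3_swap23 {f : EEn n → ℝ} (hf : ContDiff ℝ (⊤ : ℕ∞) f) (a b c : In n) :
    P3 f a b c = P3 f a c b := by
  show Dv (P2 f b c) (ev a) = Dv (P2 f c b) (ev a)
  rw [p2_swap hf b c]
lemma p4_swap12 {f : EEn n → ℝ} (hf : ContDiff ℝ (⊤ : ℕ∞) f) (a b c d : In n) :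
    P4 f a b c d = P4 f b a c d :=
  Dv_comm (contDiff_Dv (contDiff_Dv hf (ev d)) (ev c)) (ev b) (ev a)
lemma p4_swap23 {f : EEn n → ℝ} (hf : ContDiff ℝ (⊤ : ℕ∞) f) (a b c d : In n) :
    P4 f a b c d = P4 f a c b d := by
  show Dv (P3 f b c d) (ev a) = Dv (P3 f c b d) (ev a)
  rw [p3_swap12 hf]
lemma p4_swap34 {f : EEn n → ℝ} (hf : ContDiff ℝ (⊤ : ℕ∞) f) (a b c d : In n) :
    P4 f a b c d = P4 f a b d c := by
  show Dv (P3 f b c d) (ev a) = Dv (P3 f b d c) (ev a)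
  rw [p3_swap23 hf]

lemma dv_fun_sum {κ : Type*} [Fintype κ] (F : κ → EEn n → ℝ)
    (hF : ∀ i, Differentiable ℝ (F i)) (v : EEn n) (x : EEn n) :
    Dv (fun y => ∑ i, F i y) v x = ∑ i, Dv (F i) v x := by
  show fderiv ℝ (fun y => ∑ i, F i y) x v = _
  rw [fderiv_fun_sum (fun i _ => (hF i).differentiableAt)]
  simp [Dv]

lemma dv_add_fun {f g : EEn n → ℝ} (hf : Differentiable ℝ f) (hg : Differentiable ℝ g)
    (v : EEn n) :
    Dv (fun y => f y + g y) v = fun x => Dv f v x + Dv g v x := by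
  funext x
  show fderiv ℝ (fun y => f y + g y) x v = _
  rw [fderiv_fun_add hf.differentiableAt hg.differentiableAt]; rfl

lemma dv_mul3 {f g : EEn n → ℝ} (hf : Differentiable ℝ f) (hg : Differentiable ℝ g)
    (c : ℝ) (v x : EEn n) :
    Dv (fun y => f y * c * g y) v x = Dv f v x * c * g x + f x * c * Dv g v x := by
  show fderiv ℝ (fun y => f y * c * g y) x v = _
  have h1 : Differentiable ℝ (fun y => f y * c) := hf.mul_const c
  rw [fderiv_fun_mul h1.differentiableAt hg.differentiableAt]
  have h2 : fderiv ℝ (fun y => f y * c) x = c • fderiv ℝ f x := by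
    rw [fderiv_mul_const (hf.differentiableAt (x := x)) c]
  simp [h2, Dv]; ring

lemma dv_const_mul {f : EEn n → ℝ} (hf : Differentiable ℝ f) (c : ℝ) (v x : EEn n) :
    Dv (fun y => c * f y) v x = c * Dv f v x := by
  show fderiv ℝ (fun y => c * f y) x v = _
  rw [fderiv_const_mul hf.differentiableAt]; simp [Dv]

lemma dv_const' (c : ℝ) (v : EEn n) : Dv (fun _ : EEn n => c) v = fun _ => (0:ℝ) := by
  funext x; show fderiv ℝ (fun _ => c) x v = 0; simp

lemma dv_pair {κ : Type*} [Fintype κ] (f g : κ → EEn n → ℝ) (c : κ → ℝ)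
    (hf : ∀ p, Differentiable ℝ (f p)) (hg : ∀ p, Differentiable ℝ (g p)) (v : EEn n) :
    Dv (fun y => ∑ p, f p y * c p * g p y) v = fun x =>
      (∑ p, Dv (f p) v x * c p * g p x) + (∑ p, f p x * c p * Dv (g p) v x) := by
  funext x
  rw [dv_fun_sum (fun p => fun y => f p y * c p * g p y)
    (fun p => ((hf p).mul_const (c p)).mul (hg p)) v x]
  rw [← Finset.sum_add_distrib]
  exact Finset.sum_congr rfl fun p _ => dv_mul3 (hf p) (hg p) (c p) v x


lemma iter_right {f : EEn n → ℝ} (hf : ContDiff ℝ (⊤ : ℕ∞) f) {k : ℕ} (x : EEn n) (m : Fin (k+1) → EEn n) :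
    iteratedFDeriv ℝ (k+1) f x m
      = iteratedFDeriv ℝ k (Dv f (m (Fin.last k))) x (Fin.init m) := by
  rw [iteratedFDeriv_succ_apply_right]
  have h := (ContinuousLinearMap.apply ℝ ℝ (m (Fin.last k))).iteratedFDeriv_comp_left
      (f := fderiv ℝ f) (x := x) (hf.fderiv_right (m := (⊤ : ℕ∞)) (by simp)).contDiffAt (by exact_mod_cast (le_top : (k : ℕ∞) ≤ ⊤))
  have h2 : (ContinuousLinearMap.apply ℝ ℝ (m (Fin.last k))) ∘ (fderiv ℝ f)
      = Dv f (m (Fin.last k)) := rfl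
  rw [h2] at h
  rw [h]
  rfl

lemma iteratedFDeriv_three {f : EEn n → ℝ} (hf : ContDiff ℝ (⊤ : ℕ∞) f) (x : EEn n) (m : Fin 3 → EEn n) :
    iteratedFDeriv ℝ 3 f x m = Dv (Dv (Dv f (m 2)) (m 1)) (m 0) x := by
  rw [iter_right hf x m]
  have h1 : m (Fin.last 2) = m 2 := rfl
  rw [h1]
  rw [iter_right (contDiff_Dv hf _) x (Fin.init m)]
  have h2 : Fin.init m (Fin.last 1) = m 1 := rfl
  rw [h2]
  rw [iteratedFDeriv_one_apply]
  rfl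

lemma d3_eq {f : EEn n → ℝ} (hf : ContDiff ℝ (⊤ : ℕ∞) f) (x : EEn n) (a b c : In n) :
    d3 f x a b c = P3 f a b c x := by
  show iteratedFDeriv ℝ 3 f x (fun i => Pi.single (![a, b, c] i) 1) = _
  rw [iteratedFDeriv_three hf x (fun i => Pi.single (![a, b, c] i) 1)]
  rfl

lemma stdJ_antisymm (a b : In n) : stdJ n a b = - stdJ n b a := by
  rcases a with a | a <;> rcases b with b | b <;>
    simp [stdJ, Matrix.fromBlocks, Matrix.one_apply, eq_comm]

set_option maxHeartbeats 1000000 in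
lemma constancy_deriv3 {B C : EEn n → ℝ} (hB : ContDiff ℝ (⊤ : ℕ∞) B) (hC : ContDiff ℝ (⊤ : ℕ∞) C)
    (J : In n → In n → ℝ) (κ : ℝ)
    (hconst : (fun y => ∑ p : I2 n, P1 B p.1 y * J p.1 p.2 * P1 C p.2 y) = fun _ => κ)
    (a b c : In n) (x : EEn n) :
    (∑ p : I2 n,
       (P4 B a b c p.1 x * J p.1 p.2 * P1 C p.2 x
      + P3 B b c p.1 x * J p.1 p.2 * P2 C a p.2 x
      + P3 B a c p.1 x * J p.1 p.2 * P2 C b p.2 x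
      + P2 B c p.1 x * J p.1 p.2 * P3 C a b p.2 x
      + P3 B a b p.1 x * J p.1 p.2 * P2 C c p.2 x
      + P2 B b p.1 x * J p.1 p.2 * P3 C a c p.2 x
      + P2 B a p.1 x * J p.1 p.2 * P3 C b c p.2 x
      + P1 B p.1 x * J p.1 p.2 * P4 C a b c p.2 x)) = 0 := by
  have dB1 : ∀ s, Differentiable ℝ (P1 B s) := fun s => (cP1 hB s).differentiable (by simp)
  have dB2 : ∀ u s, Differentiable ℝ (P2 B u s) := fun u s => (cP2 hB u s).differentiable (by simp)
  have dB3 : ∀ u v s, Differentiable ℝ (P3 B u v s) := fun u v s => (cP3 hB u v s).differentiable (by simp)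
  have dC1 : ∀ s, Differentiable ℝ (P1 C s) := fun s => (cP1 hC s).differentiable (by simp)
  have dC2 : ∀ u s, Differentiable ℝ (P2 C u s) := fun u s => (cP2 hC u s).differentiable (by simp)
  have dC3 : ∀ u v s, Differentiable ℝ (P3 C u v s) := fun u v s => (cP3 hC u v s).differentiable (by simp)
  -- level 1
  have h1 : Dv (fun y => ∑ p : I2 n, P1 B p.1 y * J p.1 p.2 * P1 C p.2 y) (ev c)
      = fun x => (∑ p : I2 n, P2 B c p.1 x * J p.1 p.2 * P1 C p.2 x)
        + (∑ p : I2 n, P1 B p.1 x * J p.1 p.2 * P2 C c p.2 x) :=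
    dv_pair (fun p : I2 n => P1 B p.1) (fun p => P1 C p.2) (fun p => J p.1 p.2)
      (fun p => dB1 p.1) (fun p => dC1 p.2) (ev c)
  have z1 : (fun x => (∑ p : I2 n, P2 B c p.1 x * J p.1 p.2 * P1 C p.2 x)
        + (∑ p : I2 n, P1 B p.1 x * J p.1 p.2 * P2 C c p.2 x)) = fun _ => (0:ℝ) := by
    rw [← h1, hconst, dv_const']
  -- level 2
  have hA : Dv (fun y => ∑ p : I2 n, P2 B c p.1 y * J p.1 p.2 * P1 C p.2 y) (ev b)
      = fun x => (∑ p : I2 n, P3 B b c p.1 x * J p.1 p.2 * P1 C p.2 x)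
        + (∑ p : I2 n, P2 B c p.1 x * J p.1 p.2 * P2 C b p.2 x) :=
    dv_pair (fun p : I2 n => P2 B c p.1) (fun p => P1 C p.2) (fun p => J p.1 p.2)
      (fun p => dB2 c p.1) (fun p => dC1 p.2) (ev b)
  have hBb : Dv (fun y => ∑ p : I2 n, P1 B p.1 y * J p.1 p.2 * P2 C c p.2 y) (ev b)
      = fun x => (∑ p : I2 n, P2 B b p.1 x * J p.1 p.2 * P2 C c p.2 x)
        + (∑ p : I2 n, P1 B p.1 x * J p.1 p.2 * P3 C b c p.2 x) :=
    dv_pair (fun p : I2 n => P1 B p.1) (fun p => P2 C c p.2) (fun p => J p.1 p.2)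
      (fun p => dB1 p.1) (fun p => dC2 c p.2) (ev b)
  have hsplit2 : Dv (fun y => (∑ p : I2 n, P2 B c p.1 y * J p.1 p.2 * P1 C p.2 y)
        + (∑ p : I2 n, P1 B p.1 y * J p.1 p.2 * P2 C c p.2 y)) (ev b)
      = fun x => ((∑ p : I2 n, P3 B b c p.1 x * J p.1 p.2 * P1 C p.2 x)
        + (∑ p : I2 n, P2 B c p.1 x * J p.1 p.2 * P2 C b p.2 x))
        + ((∑ p : I2 n, P2 B b p.1 x * J p.1 p.2 * P2 C c p.2 x)
        + (∑ p : I2 n, P1 B p.1 x * J p.1 p.2 * P3 C b c p.2 x)) := by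
    rw [dv_add_fun
      (Differentiable.fun_sum fun p _ => ((dB2 c p.1).mul_const _).mul (dC1 p.2))
      (Differentiable.fun_sum fun p _ => ((dB1 p.1).mul_const _).mul (dC2 c p.2)) (ev b),
      hA, hBb]
  have z2 : (fun x => ((∑ p : I2 n, P3 B b c p.1 x * J p.1 p.2 * P1 C p.2 x)
        + (∑ p : I2 n, P2 B c p.1 x * J p.1 p.2 * P2 C b p.2 x))
        + ((∑ p : I2 n, P2 B b p.1 x * J p.1 p.2 * P2 C c p.2 x)
        + (∑ p : I2 n, P1 B p.1 x * J p.1 p.2 * P3 C b c p.2 x))) = fun _ => (0:ℝ) := by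
    rw [← hsplit2, z1, dv_const']
  -- level 3: four dv_pairs
  have k1 : Dv (fun y => ∑ p : I2 n, P3 B b c p.1 y * J p.1 p.2 * P1 C p.2 y) (ev a)
      = fun x => (∑ p : I2 n, P4 B a b c p.1 x * J p.1 p.2 * P1 C p.2 x)
        + (∑ p : I2 n, P3 B b c p.1 x * J p.1 p.2 * P2 C a p.2 x) :=
    dv_pair (fun p : I2 n => P3 B b c p.1) (fun p => P1 C p.2) (fun p => J p.1 p.2)
      (fun p => dB3 b c p.1) (fun p => dC1 p.2) (ev a)
  have k2 : Dv (fun y => ∑ p : I2 n, P2 B c p.1 y * J p.1 p.2 * P2 C b p.2 y) (ev a)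
      = fun x => (∑ p : I2 n, P3 B a c p.1 x * J p.1 p.2 * P2 C b p.2 x)
        + (∑ p : I2 n, P2 B c p.1 x * J p.1 p.2 * P3 C a b p.2 x) :=
    dv_pair (fun p : I2 n => P2 B c p.1) (fun p => P2 C b p.2) (fun p => J p.1 p.2)
      (fun p => dB2 c p.1) (fun p => dC2 b p.2) (ev a)
  have k3 : Dv (fun y => ∑ p : I2 n, P2 B b p.1 y * J p.1 p.2 * P2 C c p.2 y) (ev a)
      = fun x => (∑ p : I2 n, P3 B a b p.1 x * J p.1 p.2 * P2 C c p.2 x)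
        + (∑ p : I2 n, P2 B b p.1 x * J p.1 p.2 * P3 C a c p.2 x) :=
    dv_pair (fun p : I2 n => P2 B b p.1) (fun p => P2 C c p.2) (fun p => J p.1 p.2)
      (fun p => dB2 b p.1) (fun p => dC2 c p.2) (ev a)
  have k4 : Dv (fun y => ∑ p : I2 n, P1 B p.1 y * J p.1 p.2 * P3 C b c p.2 y) (ev a)
      = fun x => (∑ p : I2 n, P2 B a p.1 x * J p.1 p.2 * P3 C b c p.2 x)
        + (∑ p : I2 n, P1 B p.1 x * J p.1 p.2 * P4 C a b c p.2 x) :=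
    dv_pair (fun p : I2 n => P1 B p.1) (fun p => P3 C b c p.2) (fun p => J p.1 p.2)
      (fun p => dB1 p.1) (fun p => dC3 b c p.2) (ev a)
  have hsplit3 : Dv (fun y => ((∑ p : I2 n, P3 B b c p.1 y * J p.1 p.2 * P1 C p.2 y)
        + (∑ p : I2 n, P2 B c p.1 y * J p.1 p.2 * P2 C b p.2 y))
        + ((∑ p : I2 n, P2 B b p.1 y * J p.1 p.2 * P2 C c p.2 y)
        + (∑ p : I2 n, P1 B p.1 y * J p.1 p.2 * P3 C b c p.2 y))) (ev a)
      = fun x =>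
        (((∑ p : I2 n, P4 B a b c p.1 x * J p.1 p.2 * P1 C p.2 x)
        + (∑ p : I2 n, P3 B b c p.1 x * J p.1 p.2 * P2 C a p.2 x))
        + ((∑ p : I2 n, P3 B a c p.1 x * J p.1 p.2 * P2 C b p.2 x)
        + (∑ p : I2 n, P2 B c p.1 x * J p.1 p.2 * P3 C a b p.2 x)))
        + (((∑ p : I2 n, P3 B a b p.1 x * J p.1 p.2 * P2 C c p.2 x)
        + (∑ p : I2 n, P2 B b p.1 x * J p.1 p.2 * P3 C a c p.2 x))
        + ((∑ p : I2 n, P2 B a p.1 x * J p.1 p.2 * P3 C b c p.2 x)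
        + (∑ p : I2 n, P1 B p.1 x * J p.1 p.2 * P4 C a b c p.2 x))) := by
    rw [dv_add_fun
      ((Differentiable.fun_sum fun p _ => ((dB3 b c p.1).mul_const _).mul (dC1 p.2)).fun_add
        (Differentiable.fun_sum fun p _ => ((dB2 c p.1).mul_const _).mul (dC2 b p.2)))
      ((Differentiable.fun_sum fun p _ => ((dB2 b p.1).mul_const _).mul (dC2 c p.2)).fun_add
        (Differentiable.fun_sum fun p _ => ((dB1 p.1).mul_const _).mul (dC3 b c p.2))) (ev a),
      dv_add_fun
        (Differentiable.fun_sum fun p _ => ((dB3 b c p.1).mul_const _).mul (dC1 p.2))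
        (Differentiable.fun_sum fun p _ => ((dB2 c p.1).mul_const _).mul (dC2 b p.2)) (ev a),
      dv_add_fun
        (Differentiable.fun_sum fun p _ => ((dB2 b p.1).mul_const _).mul (dC2 c p.2))
        (Differentiable.fun_sum fun p _ => ((dB1 p.1).mul_const _).mul (dC3 b c p.2)) (ev a),
      k1, k2, k3, k4]
  have z3 : (fun x =>
        (((∑ p : I2 n, P4 B a b c p.1 x * J p.1 p.2 * P1 C p.2 x)
        + (∑ p : I2 n, P3 B b c p.1 x * J p.1 p.2 * P2 C a p.2 x))
        + ((∑ p : I2 n, P3 B a c p.1 x * J p.1 p.2 * P2 C b p.2 x)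
        + (∑ p : I2 n, P2 B c p.1 x * J p.1 p.2 * P3 C a b p.2 x)))
        + (((∑ p : I2 n, P3 B a b p.1 x * J p.1 p.2 * P2 C c p.2 x)
        + (∑ p : I2 n, P2 B b p.1 x * J p.1 p.2 * P3 C a c p.2 x))
        + ((∑ p : I2 n, P2 B a p.1 x * J p.1 p.2 * P3 C b c p.2 x)
        + (∑ p : I2 n, P1 B p.1 x * J p.1 p.2 * P4 C a b c p.2 x)))) = fun _ => (0:ℝ) := by
    rw [← hsplit3, z2, dv_const']
  have := congrFun z3 x
  simp only [Finset.sum_add_distrib]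
  linarith [this]


abbrev I6 (n : ℕ) := In n × In n × In n × In n × In n × In n

set_option maxHeartbeats 1000000 in
lemma ddot_eq {B C : EEn n → ℝ} (hB : ContDiff ℝ (⊤ : ℕ∞) B) (hC : ContDiff ℝ (⊤ : ℕ∞) C) :
    ddot B C = fun y => -(1/24) * ∑ q : I6 n,
      P3 B q.1 q.2.1 q.2.2.1 y
        * (stdJ n q.1 q.2.2.2.1 * stdJ n q.2.1 q.2.2.2.2.1 * stdJ n q.2.2.1 q.2.2.2.2.2)
        * P3 C q.2.2.2.1 q.2.2.2.2.1 q.2.2.2.2.2 y := by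
  funext y
  show -(1/24) * _ = -(1/24) * _
  congr 1
  simp only [Fintype.sum_prod_type]
  refine Finset.sum_congr rfl fun d _ => Finset.sum_congr rfl fun e _ =>
    Finset.sum_congr rfl fun f _ => Finset.sum_congr rfl fun a _ =>
    Finset.sum_congr rfl fun b _ => Finset.sum_congr rfl fun c _ => ?_
  rw [d3_eq hB, d3_eq hC]
  ring

set_option maxHeartbeats 1000000 in
lemma pgrad_ddot {B C : EEn n → ℝ} (hB : ContDiff ℝ (⊤ : ℕ∞) B) (hC : ContDiff ℝ (⊤ : ℕ∞) C)
    (x : EEn n) (t : In n) :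
    pgrad (ddot B C) x t = -(1/24) *
      ((∑ q : I6 n, P4 B t q.1 q.2.1 q.2.2.1 x
          * (stdJ n q.1 q.2.2.2.1 * stdJ n q.2.1 q.2.2.2.2.1 * stdJ n q.2.2.1 q.2.2.2.2.2)
          * P3 C q.2.2.2.1 q.2.2.2.2.1 q.2.2.2.2.2 x)
      + (∑ q : I6 n, P3 B q.1 q.2.1 q.2.2.1 x
          * (stdJ n q.1 q.2.2.2.1 * stdJ n q.2.1 q.2.2.2.2.1 * stdJ n q.2.2.1 q.2.2.2.2.2)
          * P4 C t q.2.2.2.1 q.2.2.2.2.1 q.2.2.2.2.2 x)) := by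
  have dB3 : ∀ u v s, Differentiable ℝ (P3 B u v s) :=
    fun u v s => (cP3 hB u v s).differentiable (by simp)
  have dC3 : ∀ u v s, Differentiable ℝ (P3 C u v s) :=
    fun u v s => (cP3 hC u v s).differentiable (by simp)
  show Dv (ddot B C) (ev t) x = _
  rw [ddot_eq hB hC]
  rw [dv_const_mul (Differentiable.fun_sum fun q _ =>
    ((dB3 q.1 q.2.1 q.2.2.1).mul_const _).mul (dC3 q.2.2.2.1 q.2.2.2.2.1 q.2.2.2.2.2)) _ (ev t) x]
  rw [dv_pair (fun q : I6 n => P3 B q.1 q.2.1 q.2.2.1)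
      (fun q => P3 C q.2.2.2.1 q.2.2.2.2.1 q.2.2.2.2.2)
      (fun q => stdJ n q.1 q.2.2.2.1 * stdJ n q.2.1 q.2.2.2.2.1 * stdJ n q.2.2.1 q.2.2.2.2.2)
      (fun q => dB3 _ _ _) (fun q => dC3 _ _ _) (ev t)]
  rfl

set_option maxHeartbeats 1000000 in
lemma pbracket_ddot {A B C : EEn n → ℝ} (hA : ContDiff ℝ (⊤ : ℕ∞) A) (hB : ContDiff ℝ (⊤ : ℕ∞) B)
    (hC : ContDiff ℝ (⊤ : ℕ∞) C) (x : EEn n) :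
    pbracket A (ddot B C) x = -(1/24) * EE8 (fun a b => stdJ n a b)
      (fun s => P1 A s x) (fun d e f => P3 B d e f x) (fun a b c => P3 C a b c x)
      (fun t d e f => P4 B t d e f x) (fun t a b c => P4 C t a b c x) := by
  show (∑ s, ∑ t, P1 A s x * stdJ n s t * pgrad (ddot B C) x t) = _
  simp only [pgrad_ddot hB hC x]
  rw [EE8_partial, Finset.mul_sum]
  refine Finset.sum_congr rfl fun s _ => ?_
  rw [Finset.mul_sum]
  refine Finset.sum_congr rfl fun t _ => ?_
  rw [← Finset.sum_add_distrib, Finset.mul_sum, Finset.mul_sum, Finset.mul_sum]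
  refine Finset.sum_congr rfl fun q _ => ?_
  obtain ⟨d, e, f, a, b, c⟩ := q
  show _ = _
  ring

end CyclicAux

/-- for smooth functions `X^α` on `ℝ^{2n}` whose Poisson bracket matrix is
the constant `-J`, the cyclic identity `𝔖_{α,β,γ} {X^α, ⟨⟨X^β, X^γ⟩⟩} = 0` holds. -/
theorem cyclic_bracket_ddot_identity (n : ℕ)
    (X : (Fin n ⊕ Fin n) → ((Fin n ⊕ Fin n) → ℝ) → ℝ)
    (hX : ∀ α, ContDiff ℝ (⊤ : ℕ∞) (X α))
    (hconst : ∀ α β, pbracket (X α) (X β) = fun _ => -stdJ n α β) :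
    ∀ (α β γ : Fin n ⊕ Fin n) (x : (Fin n ⊕ Fin n) → ℝ),
      pbracket (X α) (ddot (X β) (X γ)) x
        + pbracket (X β) (ddot (X γ) (X α)) x
        + pbracket (X γ) (ddot (X α) (X β)) x = 0 := by
  intro α β γ x
  let V : Fin 3 → Fin n ⊕ Fin n := ![α, β, γ]
  have halg := CyclicAux.algebra_main (I := Fin n ⊕ Fin n) (fun a b => stdJ n a b)
    (fun i s => CyclicAux.P1 (X (V i)) s x)
    (fun i a b => CyclicAux.P2 (X (V i)) a b x)
    (fun i a b c => CyclicAux.P3 (X (V i)) a b c x)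
    (fun i a b c d => CyclicAux.P4 (X (V i)) a b c d x)
    (fun a b => CyclicAux.stdJ_antisymm a b)
    (fun i a b => congrFun (CyclicAux.p2_swap (hX (V i)) a b) x)
    (fun i a b c => congrFun (CyclicAux.p3_swap12 (hX (V i)) a b c) x)
    (fun i a b c => congrFun (CyclicAux.p3_swap23 (hX (V i)) a b c) x)
    (fun i a b c d => congrFun (CyclicAux.p4_swap12 (hX (V i)) a b c d) x)
    (fun i a b c d => congrFun (CyclicAux.p4_swap23 (hX (V i)) a b c d) x)
    (fun i a b c d => congrFun (CyclicAux.p4_swap34 (hX (V i)) a b c d) x)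
    (fun i j a b c => by
      refine CyclicAux.constancy_deriv3 (hX (V i)) (hX (V j)) (fun a b => stdJ n a b)
        (-stdJ n (V i) (V j)) ?_ a b c x
      have h0 := hconst (V i) (V j)
      funext y
      have : pbracket (X (V i)) (X (V j)) y = -stdJ n (V i) (V j) := congrFun h0 y
      rw [← this]
      show _ = ∑ s, ∑ t, pgrad (X (V i)) y s * stdJ n s t * pgrad (X (V j)) y t
      rw [Fintype.sum_prod_type]
      rfl)
  have e1 := CyclicAux.pbracket_ddot (hX α) (hX β) (hX γ) x
  have e2 := CyclicAux.pbracket_ddot (hX β) (hX γ) (hX α) x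
  have e3 := CyclicAux.pbracket_ddot (hX γ) (hX α) (hX β) x
  have hV0 : V 0 = α := rfl
  have hV1 : V 1 = β := rfl
  have hV2 : V 2 = γ := rfl
  rw [e1, e2, e3]
  simp only [hV0, hV1, hV2] at halg
  linarith [halg]
end

section
/- For smooth functions s₁,…,sₙ on ℝ^{2n}, the fully contracted expression Σ (D²_{αβ}s_l ⊗ D_γ s_m + D²_{βγ}s_l ⊗ D_α s_m + D²_{γα}s_l ⊗ D_β s_m) J^{αα'}J^{ββ'}J^{γγ'} (D²_{α'β'}s_r ⊗ D_{γ'} s_i + D²_{β'γ'}s_r ⊗ D_{α'} s_i + D²_{γ'α'}s_r ⊗ D_{β'} s_i), when contracted against a tensor c^{lm} c'^{ri} symmetric in (l,m) and in (r,i), and with {s_m, s_i} = 0 for all m,i, gives zero. -/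
open Matrix

/-- Second symmetric differential: `D²A(x)[e_α, e_β] = ∂²A/∂X^α∂X^β`. -/
noncomputable def d2 {n : ℕ} (A : ((Fin n ⊕ Fin n) → ℝ) → ℝ)
    (x : (Fin n ⊕ Fin n) → ℝ) (α β : Fin n ⊕ Fin n) : ℝ :=
  iteratedFDeriv ℝ 2 A x (fun i => Pi.single (![α, β] i) 1)

/-- The cyclic symmetrization `𝔖(D²s_l ⊗ Ds_m)_{αβγ}`. -/
noncomputable def cycSym {n : ℕ} (sl sm : ((Fin n ⊕ Fin n) → ℝ) → ℝ)
    (x : (Fin n ⊕ Fin n) → ℝ) (α β γ : Fin n ⊕ Fin n) : ℝ :=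
  d2 sl x α β * pgrad sm x γ + d2 sl x β γ * pgrad sm x α + d2 sl x γ α * pgrad sm x β


section AuxAlgebra


variable {ι : Type*} [Fintype ι]

lemma sum6_expand (f : ι → ι → ι → ι → ι → ι → ℝ) :
    ∑ p : ι × ι × ι × ι × ι × ι, f p.1 p.2.1 p.2.2.1 p.2.2.2.1 p.2.2.2.2.1 p.2.2.2.2.2
      = ∑ a, ∑ b, ∑ c, ∑ d, ∑ e, ∑ g, f a b c d e g := by
  simp only [Fintype.sum_prod_type]

lemma flipJ (J : ι → ι → ℝ) (hJ : ∀ a b, J a b = - J b a) (f g : ι → ℝ) :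
    (∑ a, ∑ b, f a * J a b * g b) = -(∑ a, ∑ b, g a * J a b * f b) := by
  conv_lhs => rw [Finset.sum_comm]
  rw [← Finset.sum_neg_distrib]
  refine Finset.sum_congr rfl fun x _ => ?_
  rw [← Finset.sum_neg_distrib]
  refine Finset.sum_congr rfl fun y _ => ?_
  rw [hJ y x]; ring

lemma factor_mid (J : ι → ι → ℝ) (L R : ι → ι → ι → ℝ) :
    (∑ b, ∑ b', (∑ a, ∑ a', L a a' b) * J b b' * (∑ c, ∑ c', R c c' b'))
      = ∑ p : ι × ι × ι × ι × ι × ι,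
          L p.2.2.2.2.1 p.2.2.2.2.2 p.1 * J p.1 p.2.1 * R p.2.2.1 p.2.2.2.1 p.2.1 := by
  simp only [Finset.sum_mul, Finset.mul_sum]
  rw [← sum6_expand fun b b' c c' a a' => L a a' b * J b b' * R c c' b']

lemma factor_diag (J : ι → ι → ℝ) (L : ι → ι → ι → ι → ℝ) (R : ι → ι → ℝ) :
    ((∑ a, ∑ b, ∑ d, ∑ e, L a b d e) * (∑ c, ∑ f, R c f))
      = ∑ p : ι × ι × ι × ι × ι × ι,
          L p.2.2.1 p.2.2.2.1 p.2.2.2.2.1 p.2.2.2.2.2 * R p.1 p.2.1 := by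
  simp only [Finset.sum_mul, Finset.mul_sum]
  rw [← sum6_expand fun c f a b d e => L a b d e * R c f]


lemma inner_reduce (J : ι → ι → ℝ) (hJ : ∀ a b, J a b = - J b a)
    (hl hr : ι → ι → ℝ) (gm gi : ι → ℝ)
    (hsl : ∀ a b, hl a b = hl b a) (hsr : ∀ a b, hr a b = hr b a) :
    (∑ α, ∑ β, ∑ γ, ∑ α', ∑ β', ∑ γ',
       (hl α β * gm γ + hl β γ * gm α + hl γ α * gm β) * J α α' * J β β' * J γ γ' *
       (hr α' β' * gi γ' + hr β' γ' * gi α' + hr γ' α' * gi β'))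
    = 3 * ((∑ a, ∑ b, ∑ d, ∑ e, hl a b * J a d * J b e * hr d e) * (∑ a, ∑ b, gm a * J a b * gi b)) - 6 * (∑ a, ∑ b, (∑ u, ∑ v, hl a u * J u v * gi v) * J a b * (∑ u, ∑ v, hr b u * J u v * gm v)) := by
  rw [← sum6_expand fun α β γ α' β' γ' =>
       (hl α β * gm γ + hl β γ * gm α + hl γ α * gm β) * J α α' * J β β' * J γ γ' *
       (hr α' β' * gi γ' + hr β' γ' * gi α' + hr γ' α' * gi β')]

  have E11 : (∑ p : ι × ι × ι × ι × ι × ι, hl p.1 p.2.1 * gm p.2.2.1 * J p.1 p.2.2.2.1 * J p.2.1 p.2.2.2.2.1 * J p.2.2.1 p.2.2.2.2.2 * (hr p.2.2.2.1 p.2.2.2.2.1 * gi p.2.2.2.2.2)) = (∑ a, ∑ b, ∑ d, ∑ e, hl a b * J a d * J b e * hr d e) * (∑ a, ∑ b, gm a * J a b * gi b) :=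
    (Fintype.sum_equiv ⟨fun p => (p.2.2.1, p.2.2.2.2.2, p.1, p.2.1, p.2.2.2.1, p.2.2.2.2.1), fun p => (p.2.2.1, p.2.2.2.1, p.1, p.2.2.2.2.1, p.2.2.2.2.2, p.2.1), fun p => rfl, fun p => rfl⟩ _ _ fun p => by
        simp only [Equiv.coe_fn_mk]; ring).trans
      (factor_diag J (fun a b d e => hl a b * J a d * J b e * hr d e)
        (fun a b => gm a * J a b * gi b)).symm

  have E22 : (∑ p : ι × ι × ι × ι × ι × ι, hl p.2.1 p.2.2.1 * gm p.1 * J p.1 p.2.2.2.1 * J p.2.1 p.2.2.2.2.1 * J p.2.2.1 p.2.2.2.2.2 * (hr p.2.2.2.2.1 p.2.2.2.2.2 * gi p.2.2.2.1)) = (∑ a, ∑ b, ∑ d, ∑ e, hl a b * J a d * J b e * hr d e) * (∑ a, ∑ b, gm a * J a b * gi b) :=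
    (Fintype.sum_equiv ⟨fun p => (p.1, p.2.2.2.1, p.2.1, p.2.2.1, p.2.2.2.2.1, p.2.2.2.2.2), fun p => (p.1, p.2.2.1, p.2.2.2.1, p.2.1, p.2.2.2.2.1, p.2.2.2.2.2), fun p => rfl, fun p => rfl⟩ _ _ fun p => by
        simp only [Equiv.coe_fn_mk]; ring).trans
      (factor_diag J (fun a b d e => hl a b * J a d * J b e * hr d e)
        (fun a b => gm a * J a b * gi b)).symm

  have E33 : (∑ p : ι × ι × ι × ι × ι × ι, hl p.2.2.1 p.1 * gm p.2.1 * J p.1 p.2.2.2.1 * J p.2.1 p.2.2.2.2.1 * J p.2.2.1 p.2.2.2.2.2 * (hr p.2.2.2.2.2 p.2.2.2.1 * gi p.2.2.2.2.1)) = (∑ a, ∑ b, ∑ d, ∑ e, hl a b * J a d * J b e * hr d e) * (∑ a, ∑ b, gm a * J a b * gi b) :=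
    (Fintype.sum_equiv ⟨fun p => (p.2.1, p.2.2.2.2.1, p.2.2.1, p.1, p.2.2.2.2.2, p.2.2.2.1), fun p => (p.2.2.2.1, p.1, p.2.2.1, p.2.2.2.2.2, p.2.1, p.2.2.2.2.1), fun p => rfl, fun p => rfl⟩ _ _ fun p => by
        simp only [Equiv.coe_fn_mk]; ring).trans
      (factor_diag J (fun a b d e => hl a b * J a d * J b e * hr d e)
        (fun a b => gm a * J a b * gi b)).symm

  have E12 : (∑ p : ι × ι × ι × ι × ι × ι, hl p.1 p.2.1 * gm p.2.2.1 * J p.1 p.2.2.2.1 * J p.2.1 p.2.2.2.2.1 * J p.2.2.1 p.2.2.2.2.2 * (hr p.2.2.2.2.1 p.2.2.2.2.2 * gi p.2.2.2.1)) = -(∑ a, ∑ b, (∑ u, ∑ v, hl a u * J u v * gi v) * J a b * (∑ u, ∑ v, hr b u * J u v * gm v)) := by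
    have step : (∑ p : ι × ι × ι × ι × ι × ι, hl p.1 p.2.1 * gm p.2.2.1 * J p.1 p.2.2.2.1 * J p.2.1 p.2.2.2.2.1 * J p.2.2.1 p.2.2.2.2.2 * (hr p.2.2.2.2.1 p.2.2.2.2.2 * gi p.2.2.2.1))
        = ∑ b, ∑ b', (∑ a, ∑ a', hl a b * J a a' * gi a') * J b b' * (∑ cc, ∑ c', gm cc * J cc c' * hr b' c') :=
      (Fintype.sum_equiv ⟨fun p => (p.2.1, p.2.2.2.2.1, p.2.2.1, p.2.2.2.2.2, p.1, p.2.2.2.1), fun p => (p.2.2.2.2.1, p.1, p.2.2.1, p.2.2.2.2.2, p.2.1, p.2.2.2.1), fun p => rfl, fun p => rfl⟩ _ _ fun p => by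
          simp only [Equiv.coe_fn_mk]; ring).trans
        (factor_mid J (fun a a' b => hl a b * J a a' * gi a') (fun cc c' b' => gm cc * J cc c' * hr b' c')).symm
    rw [step]
    have lr : ∀ b : ι, (∑ a, ∑ a', hl a b * J a a' * gi a') = ∑ u, ∑ v, hl b u * J u v * gi v :=
      fun b => Finset.sum_congr rfl fun a _ => Finset.sum_congr rfl fun a' _ => by rw [hsl a b]
    have rr : ∀ b' : ι, (∑ cc, ∑ c', gm cc * J cc c' * hr b' c')
        = -(∑ u, ∑ v, hr b' u * J u v * gm v) := fun b' => flipJ J hJ gm fun c' => hr b' c'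
    calc (∑ b, ∑ b', (∑ a, ∑ a', hl a b * J a a' * gi a') * J b b' * (∑ cc, ∑ c', gm cc * J cc c' * hr b' c'))
        = ∑ b, ∑ b', -((∑ u, ∑ v, hl b u * J u v * gi v) * J b b' * (∑ u, ∑ v, hr b' u * J u v * gm v)) :=
          Finset.sum_congr rfl fun b _ => Finset.sum_congr rfl fun b' _ => by
            rw [lr b, rr b']; ring
      _ = -(∑ a, ∑ b, (∑ u, ∑ v, hl a u * J u v * gi v) * J a b * (∑ u, ∑ v, hr b u * J u v * gm v)) := by simp only [Finset.sum_neg_distrib]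

  have E13 : (∑ p : ι × ι × ι × ι × ι × ι, hl p.1 p.2.1 * gm p.2.2.1 * J p.1 p.2.2.2.1 * J p.2.1 p.2.2.2.2.1 * J p.2.2.1 p.2.2.2.2.2 * (hr p.2.2.2.2.2 p.2.2.2.1 * gi p.2.2.2.2.1)) = -(∑ a, ∑ b, (∑ u, ∑ v, hl a u * J u v * gi v) * J a b * (∑ u, ∑ v, hr b u * J u v * gm v)) := by
    have step : (∑ p : ι × ι × ι × ι × ι × ι, hl p.1 p.2.1 * gm p.2.2.1 * J p.1 p.2.2.2.1 * J p.2.1 p.2.2.2.2.1 * J p.2.2.1 p.2.2.2.2.2 * (hr p.2.2.2.2.2 p.2.2.2.1 * gi p.2.2.2.2.1))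
        = ∑ b, ∑ b', (∑ a, ∑ a', hl b a * J a a' * gi a') * J b b' * (∑ cc, ∑ c', gm cc * J cc c' * hr c' b') :=
      (Fintype.sum_equiv ⟨fun p => (p.1, p.2.2.2.1, p.2.2.1, p.2.2.2.2.2, p.2.1, p.2.2.2.2.1), fun p => (p.1, p.2.2.2.2.1, p.2.2.1, p.2.1, p.2.2.2.2.2, p.2.2.2.1), fun p => rfl, fun p => rfl⟩ _ _ fun p => by
          simp only [Equiv.coe_fn_mk]; ring).trans
        (factor_mid J (fun a a' b => hl b a * J a a' * gi a') (fun cc c' b' => gm cc * J cc c' * hr c' b')).symm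
    rw [step]
    have lr : ∀ b : ι, (∑ a, ∑ a', hl b a * J a a' * gi a') = ∑ u, ∑ v, hl b u * J u v * gi v :=
      fun b => rfl
    have rr : ∀ b' : ι, (∑ cc, ∑ c', gm cc * J cc c' * hr c' b')
        = -(∑ u, ∑ v, hr b' u * J u v * gm v) := fun b' =>
      (flipJ J hJ gm fun c' => hr c' b').trans (neg_inj.mpr
        (Finset.sum_congr rfl fun a _ => Finset.sum_congr rfl fun b _ => by
          show hr a b' * J a b * gm b = hr b' a * J a b * gm b
          rw [hsr a b']))
    calc (∑ b, ∑ b', (∑ a, ∑ a', hl b a * J a a' * gi a') * J b b' * (∑ cc, ∑ c', gm cc * J cc c' * hr c' b'))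
        = ∑ b, ∑ b', -((∑ u, ∑ v, hl b u * J u v * gi v) * J b b' * (∑ u, ∑ v, hr b' u * J u v * gm v)) :=
          Finset.sum_congr rfl fun b _ => Finset.sum_congr rfl fun b' _ => by
            rw [lr b, rr b']; ring
      _ = -(∑ a, ∑ b, (∑ u, ∑ v, hl a u * J u v * gi v) * J a b * (∑ u, ∑ v, hr b u * J u v * gm v)) := by simp only [Finset.sum_neg_distrib]

  have E21 : (∑ p : ι × ι × ι × ι × ι × ι, hl p.2.1 p.2.2.1 * gm p.1 * J p.1 p.2.2.2.1 * J p.2.1 p.2.2.2.2.1 * J p.2.2.1 p.2.2.2.2.2 * (hr p.2.2.2.1 p.2.2.2.2.1 * gi p.2.2.2.2.2)) = -(∑ a, ∑ b, (∑ u, ∑ v, hl a u * J u v * gi v) * J a b * (∑ u, ∑ v, hr b u * J u v * gm v)) := by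
    have step : (∑ p : ι × ι × ι × ι × ι × ι, hl p.2.1 p.2.2.1 * gm p.1 * J p.1 p.2.2.2.1 * J p.2.1 p.2.2.2.2.1 * J p.2.2.1 p.2.2.2.2.2 * (hr p.2.2.2.1 p.2.2.2.2.1 * gi p.2.2.2.2.2))
        = ∑ b, ∑ b', (∑ a, ∑ a', hl b a * J a a' * gi a') * J b b' * (∑ cc, ∑ c', gm cc * J cc c' * hr c' b') :=
      (Fintype.sum_equiv ⟨fun p => (p.2.1, p.2.2.2.2.1, p.1, p.2.2.2.1, p.2.2.1, p.2.2.2.2.2), fun p => (p.2.2.1, p.1, p.2.2.2.2.1, p.2.2.2.1, p.2.1, p.2.2.2.2.2), fun p => rfl, fun p => rfl⟩ _ _ fun p => by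
          simp only [Equiv.coe_fn_mk]; ring).trans
        (factor_mid J (fun a a' b => hl b a * J a a' * gi a') (fun cc c' b' => gm cc * J cc c' * hr c' b')).symm
    rw [step]
    have lr : ∀ b : ι, (∑ a, ∑ a', hl b a * J a a' * gi a') = ∑ u, ∑ v, hl b u * J u v * gi v :=
      fun b => rfl
    have rr : ∀ b' : ι, (∑ cc, ∑ c', gm cc * J cc c' * hr c' b')
        = -(∑ u, ∑ v, hr b' u * J u v * gm v) := fun b' =>
      (flipJ J hJ gm fun c' => hr c' b').trans (neg_inj.mpr
        (Finset.sum_congr rfl fun a _ => Finset.sum_congr rfl fun b _ => by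
          show hr a b' * J a b * gm b = hr b' a * J a b * gm b
          rw [hsr a b']))
    calc (∑ b, ∑ b', (∑ a, ∑ a', hl b a * J a a' * gi a') * J b b' * (∑ cc, ∑ c', gm cc * J cc c' * hr c' b'))
        = ∑ b, ∑ b', -((∑ u, ∑ v, hl b u * J u v * gi v) * J b b' * (∑ u, ∑ v, hr b' u * J u v * gm v)) :=
          Finset.sum_congr rfl fun b _ => Finset.sum_congr rfl fun b' _ => by
            rw [lr b, rr b']; ring
      _ = -(∑ a, ∑ b, (∑ u, ∑ v, hl a u * J u v * gi v) * J a b * (∑ u, ∑ v, hr b u * J u v * gm v)) := by simp only [Finset.sum_neg_distrib]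

  have E23 : (∑ p : ι × ι × ι × ι × ι × ι, hl p.2.1 p.2.2.1 * gm p.1 * J p.1 p.2.2.2.1 * J p.2.1 p.2.2.2.2.1 * J p.2.2.1 p.2.2.2.2.2 * (hr p.2.2.2.2.2 p.2.2.2.1 * gi p.2.2.2.2.1)) = -(∑ a, ∑ b, (∑ u, ∑ v, hl a u * J u v * gi v) * J a b * (∑ u, ∑ v, hr b u * J u v * gm v)) := by
    have step : (∑ p : ι × ι × ι × ι × ι × ι, hl p.2.1 p.2.2.1 * gm p.1 * J p.1 p.2.2.2.1 * J p.2.1 p.2.2.2.2.1 * J p.2.2.1 p.2.2.2.2.2 * (hr p.2.2.2.2.2 p.2.2.2.1 * gi p.2.2.2.2.1))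
        = ∑ b, ∑ b', (∑ a, ∑ a', hl a b * J a a' * gi a') * J b b' * (∑ cc, ∑ c', gm cc * J cc c' * hr b' c') :=
      (Fintype.sum_equiv ⟨fun p => (p.2.2.1, p.2.2.2.2.2, p.1, p.2.2.2.1, p.2.1, p.2.2.2.2.1), fun p => (p.2.2.1, p.2.2.2.2.1, p.1, p.2.2.2.1, p.2.2.2.2.2, p.2.1), fun p => rfl, fun p => rfl⟩ _ _ fun p => by
          simp only [Equiv.coe_fn_mk]; ring).trans
        (factor_mid J (fun a a' b => hl a b * J a a' * gi a') (fun cc c' b' => gm cc * J cc c' * hr b' c')).symm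
    rw [step]
    have lr : ∀ b : ι, (∑ a, ∑ a', hl a b * J a a' * gi a') = ∑ u, ∑ v, hl b u * J u v * gi v :=
      fun b => Finset.sum_congr rfl fun a _ => Finset.sum_congr rfl fun a' _ => by rw [hsl a b]
    have rr : ∀ b' : ι, (∑ cc, ∑ c', gm cc * J cc c' * hr b' c')
        = -(∑ u, ∑ v, hr b' u * J u v * gm v) := fun b' => flipJ J hJ gm fun c' => hr b' c'
    calc (∑ b, ∑ b', (∑ a, ∑ a', hl a b * J a a' * gi a') * J b b' * (∑ cc, ∑ c', gm cc * J cc c' * hr b' c'))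
        = ∑ b, ∑ b', -((∑ u, ∑ v, hl b u * J u v * gi v) * J b b' * (∑ u, ∑ v, hr b' u * J u v * gm v)) :=
          Finset.sum_congr rfl fun b _ => Finset.sum_congr rfl fun b' _ => by
            rw [lr b, rr b']; ring
      _ = -(∑ a, ∑ b, (∑ u, ∑ v, hl a u * J u v * gi v) * J a b * (∑ u, ∑ v, hr b u * J u v * gm v)) := by simp only [Finset.sum_neg_distrib]

  have E31 : (∑ p : ι × ι × ι × ι × ι × ι, hl p.2.2.1 p.1 * gm p.2.1 * J p.1 p.2.2.2.1 * J p.2.1 p.2.2.2.2.1 * J p.2.2.1 p.2.2.2.2.2 * (hr p.2.2.2.1 p.2.2.2.2.1 * gi p.2.2.2.2.2)) = -(∑ a, ∑ b, (∑ u, ∑ v, hl a u * J u v * gi v) * J a b * (∑ u, ∑ v, hr b u * J u v * gm v)) := by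
    have step : (∑ p : ι × ι × ι × ι × ι × ι, hl p.2.2.1 p.1 * gm p.2.1 * J p.1 p.2.2.2.1 * J p.2.1 p.2.2.2.2.1 * J p.2.2.1 p.2.2.2.2.2 * (hr p.2.2.2.1 p.2.2.2.2.1 * gi p.2.2.2.2.2))
        = ∑ b, ∑ b', (∑ a, ∑ a', hl a b * J a a' * gi a') * J b b' * (∑ cc, ∑ c', gm cc * J cc c' * hr b' c') :=
      (Fintype.sum_equiv ⟨fun p => (p.1, p.2.2.2.1, p.2.1, p.2.2.2.2.1, p.2.2.1, p.2.2.2.2.2), fun p => (p.1, p.2.2.1, p.2.2.2.2.1, p.2.1, p.2.2.2.1, p.2.2.2.2.2), fun p => rfl, fun p => rfl⟩ _ _ fun p => by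
          simp only [Equiv.coe_fn_mk]; ring).trans
        (factor_mid J (fun a a' b => hl a b * J a a' * gi a') (fun cc c' b' => gm cc * J cc c' * hr b' c')).symm
    rw [step]
    have lr : ∀ b : ι, (∑ a, ∑ a', hl a b * J a a' * gi a') = ∑ u, ∑ v, hl b u * J u v * gi v :=
      fun b => Finset.sum_congr rfl fun a _ => Finset.sum_congr rfl fun a' _ => by rw [hsl a b]
    have rr : ∀ b' : ι, (∑ cc, ∑ c', gm cc * J cc c' * hr b' c')
        = -(∑ u, ∑ v, hr b' u * J u v * gm v) := fun b' => flipJ J hJ gm fun c' => hr b' c'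
    calc (∑ b, ∑ b', (∑ a, ∑ a', hl a b * J a a' * gi a') * J b b' * (∑ cc, ∑ c', gm cc * J cc c' * hr b' c'))
        = ∑ b, ∑ b', -((∑ u, ∑ v, hl b u * J u v * gi v) * J b b' * (∑ u, ∑ v, hr b' u * J u v * gm v)) :=
          Finset.sum_congr rfl fun b _ => Finset.sum_congr rfl fun b' _ => by
            rw [lr b, rr b']; ring
      _ = -(∑ a, ∑ b, (∑ u, ∑ v, hl a u * J u v * gi v) * J a b * (∑ u, ∑ v, hr b u * J u v * gm v)) := by simp only [Finset.sum_neg_distrib]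

  have E32 : (∑ p : ι × ι × ι × ι × ι × ι, hl p.2.2.1 p.1 * gm p.2.1 * J p.1 p.2.2.2.1 * J p.2.1 p.2.2.2.2.1 * J p.2.2.1 p.2.2.2.2.2 * (hr p.2.2.2.2.1 p.2.2.2.2.2 * gi p.2.2.2.1)) = -(∑ a, ∑ b, (∑ u, ∑ v, hl a u * J u v * gi v) * J a b * (∑ u, ∑ v, hr b u * J u v * gm v)) := by
    have step : (∑ p : ι × ι × ι × ι × ι × ι, hl p.2.2.1 p.1 * gm p.2.1 * J p.1 p.2.2.2.1 * J p.2.1 p.2.2.2.2.1 * J p.2.2.1 p.2.2.2.2.2 * (hr p.2.2.2.2.1 p.2.2.2.2.2 * gi p.2.2.2.1))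
        = ∑ b, ∑ b', (∑ a, ∑ a', hl b a * J a a' * gi a') * J b b' * (∑ cc, ∑ c', gm cc * J cc c' * hr c' b') :=
      (Fintype.sum_equiv ⟨fun p => (p.2.2.1, p.2.2.2.2.2, p.2.1, p.2.2.2.2.1, p.1, p.2.2.2.1), fun p => (p.2.2.2.2.1, p.2.2.1, p.1, p.2.2.2.2.2, p.2.2.2.1, p.2.1), fun p => rfl, fun p => rfl⟩ _ _ fun p => by
          simp only [Equiv.coe_fn_mk]; ring).trans
        (factor_mid J (fun a a' b => hl b a * J a a' * gi a') (fun cc c' b' => gm cc * J cc c' * hr c' b')).symm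
    rw [step]
    have lr : ∀ b : ι, (∑ a, ∑ a', hl b a * J a a' * gi a') = ∑ u, ∑ v, hl b u * J u v * gi v :=
      fun b => rfl
    have rr : ∀ b' : ι, (∑ cc, ∑ c', gm cc * J cc c' * hr c' b')
        = -(∑ u, ∑ v, hr b' u * J u v * gm v) := fun b' =>
      (flipJ J hJ gm fun c' => hr c' b').trans (neg_inj.mpr
        (Finset.sum_congr rfl fun a _ => Finset.sum_congr rfl fun b _ => by
          show hr a b' * J a b * gm b = hr b' a * J a b * gm b
          rw [hsr a b']))
    calc (∑ b, ∑ b', (∑ a, ∑ a', hl b a * J a a' * gi a') * J b b' * (∑ cc, ∑ c', gm cc * J cc c' * hr c' b'))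
        = ∑ b, ∑ b', -((∑ u, ∑ v, hl b u * J u v * gi v) * J b b' * (∑ u, ∑ v, hr b' u * J u v * gm v)) :=
          Finset.sum_congr rfl fun b _ => Finset.sum_congr rfl fun b' _ => by
            rw [lr b, rr b']; ring
      _ = -(∑ a, ∑ b, (∑ u, ∑ v, hl a u * J u v * gi v) * J a b * (∑ u, ∑ v, hr b u * J u v * gm v)) := by simp only [Finset.sum_neg_distrib]

  have split : (∑ p : ι × ι × ι × ι × ι × ι,
      (hl p.1 p.2.1 * gm p.2.2.1 + hl p.2.1 p.2.2.1 * gm p.1 + hl p.2.2.1 p.1 * gm p.2.1) *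
        J p.1 p.2.2.2.1 * J p.2.1 p.2.2.2.2.1 * J p.2.2.1 p.2.2.2.2.2 *
      (hr p.2.2.2.1 p.2.2.2.2.1 * gi p.2.2.2.2.2 + hr p.2.2.2.2.1 p.2.2.2.2.2 * gi p.2.2.2.1 +
       hr p.2.2.2.2.2 p.2.2.2.1 * gi p.2.2.2.2.1))
      = (∑ p : ι × ι × ι × ι × ι × ι, hl p.1 p.2.1 * gm p.2.2.1 * J p.1 p.2.2.2.1 * J p.2.1 p.2.2.2.2.1 * J p.2.2.1 p.2.2.2.2.2 * (hr p.2.2.2.1 p.2.2.2.2.1 * gi p.2.2.2.2.2)) + (∑ p : ι × ι × ι × ι × ι × ι, hl p.1 p.2.1 * gm p.2.2.1 * J p.1 p.2.2.2.1 * J p.2.1 p.2.2.2.2.1 * J p.2.2.1 p.2.2.2.2.2 * (hr p.2.2.2.2.1 p.2.2.2.2.2 * gi p.2.2.2.1)) + (∑ p : ι × ι × ι × ι × ι × ι, hl p.1 p.2.1 * gm p.2.2.1 * J p.1 p.2.2.2.1 * J p.2.1 p.2.2.2.2.1 * J p.2.2.1 p.2.2.2.2.2 * (hr p.2.2.2.2.2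 p.2.2.2.1 * gi p.2.2.2.2.1)) + (∑ p : ι × ι × ι × ι × ι × ι, hl p.2.1 p.2.2.1 * gm p.1 * J p.1 p.2.2.2.1 * J p.2.1 p.2.2.2.2.1 * J p.2.2.1 p.2.2.2.2.2 * (hr p.2.2.2.1 p.2.2.2.2.1 * gi p.2.2.2.2.2)) + (∑ p : ι × ι × ι × ι × ι × ι, hl p.2.1 p.2.2.1 * gm p.1 * J p.1 p.2.2.2.1 * J p.2.1 p.2.2.2.2.1 * J p.2.2.1 p.2.2.2.2.2 * (hr p.2.2.2.2.1 p.2.2.2.2.2 * gi p.2.2.2.1)) + (∑ p : ι × ι × ι × ι × ι × ι, hl p.2.1 p.2.2.1 * gm p.1 * J p.1 p.2.2.2.1 * J p.2.1 p.2.2.2.2.1 * J p.2.2.1 p.2.2.2.2.2 * (hr p.2.2.2.2.2 p.2.2.2.1 * gi p.2.2.2.2.1)) + (∑ p : ι × ι × ι × ι × ι × ι, hl p.2.2.1 p.1 * gm p.2.1 * J p.1 p.2.2.2.1 * J p.2.1 p.2.2.2.2.1 * J p.2.2.1 p.2.2.2.2.2 * (hr p.2.2.2.1 p.2.2.2.2.1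 * gi p.2.2.2.2.2)) + (∑ p : ι × ι × ι × ι × ι × ι, hl p.2.2.1 p.1 * gm p.2.1 * J p.1 p.2.2.2.1 * J p.2.1 p.2.2.2.2.1 * J p.2.2.1 p.2.2.2.2.2 * (hr p.2.2.2.2.1 p.2.2.2.2.2 * gi p.2.2.2.1)) + (∑ p : ι × ι × ι × ι × ι × ι, hl p.2.2.1 p.1 * gm p.2.1 * J p.1 p.2.2.2.1 * J p.2.1 p.2.2.2.2.1 * J p.2.2.1 p.2.2.2.2.2 * (hr p.2.2.2.2.2 p.2.2.2.1 * gi p.2.2.2.2.1)) := by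
    calc _ = ∑ p : ι × ι × ι × ι × ι × ι, (hl p.1 p.2.1 * gm p.2.2.1 * J p.1 p.2.2.2.1 * J p.2.1 p.2.2.2.2.1 * J p.2.2.1 p.2.2.2.2.2 * (hr p.2.2.2.1 p.2.2.2.2.1 * gi p.2.2.2.2.2) + hl p.1 p.2.1 * gm p.2.2.1 * J p.1 p.2.2.2.1 * J p.2.1 p.2.2.2.2.1 * J p.2.2.1 p.2.2.2.2.2 * (hr p.2.2.2.2.1 p.2.2.2.2.2 * gi p.2.2.2.1) + hl p.1 p.2.1 * gm p.2.2.1 * J p.1 p.2.2.2.1 * J p.2.1 p.2.2.2.2.1 * J p.2.2.1 p.2.2.2.2.2 * (hr p.2.2.2.2.2 p.2.2.2.1 * gi p.2.2.2.2.1) + hl p.2.1 p.2.2.1 * gm p.1 * J p.1 p.2.2.2.1 * J p.2.1 p.2.2.2.2.1 * J p.2.2.1 p.2.2.2.2.2 * (hr p.2.2.2.1 p.2.2.2.2.1 * gi p.2.2.2.2.2) + hl p.2.1 p.2.2.1 * gm p.1 * J p.1 p.2.2.2.1 * J p.2.1 p.2.2.2.2.1 * J p.2.2.1 p.2.2.2.2.2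 * (hr p.2.2.2.2.1 p.2.2.2.2.2 * gi p.2.2.2.1) + hl p.2.1 p.2.2.1 * gm p.1 * J p.1 p.2.2.2.1 * J p.2.1 p.2.2.2.2.1 * J p.2.2.1 p.2.2.2.2.2 * (hr p.2.2.2.2.2 p.2.2.2.1 * gi p.2.2.2.2.1) + hl p.2.2.1 p.1 * gm p.2.1 * J p.1 p.2.2.2.1 * J p.2.1 p.2.2.2.2.1 * J p.2.2.1 p.2.2.2.2.2 * (hr p.2.2.2.1 p.2.2.2.2.1 * gi p.2.2.2.2.2) + hl p.2.2.1 p.1 * gm p.2.1 * J p.1 p.2.2.2.1 * J p.2.1 p.2.2.2.2.1 * J p.2.2.1 p.2.2.2.2.2 * (hr p.2.2.2.2.1 p.2.2.2.2.2 * gi p.2.2.2.1) + hl p.2.2.1 p.1 * gm p.2.1 * J p.1 p.2.2.2.1 * J p.2.1 p.2.2.2.2.1 * J p.2.2.1 p.2.2.2.2.2 * (hr p.2.2.2.2.2 p.2.2.2.1 * gi p.2.2.2.2.1)) := Finset.sum_congr rfl fun p _ => by ring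
      _ = _ := by simp only [Finset.sum_add_distrib]
  rw [split, E11, E12, E13, E21, E22, E23, E31, E32, E33]
  ring

theorem keyAlg {κ : Type*} [Fintype κ] (J : ι → ι → ℝ) (hJ : ∀ a b, J a b = - J b a)
    (g : κ → ι → ℝ) (h : κ → ι → ι → ℝ)
    (hsym : ∀ k a b, h k a b = h k b a)
    (hP : ∀ m i, (∑ a, ∑ b, g m a * J a b * g i b) = 0)
    (hM : ∀ m i γ, (∑ a, ∑ b, h m γ a * J a b * g i b)
        = ∑ a, ∑ b, h i γ a * J a b * g m b)
    (c c' : κ → κ → ℝ) (hc : ∀ l m, c l m = c m l) (hc' : ∀ r i, c' r i = c' i r) :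
    ∑ l, ∑ m, ∑ r, ∑ i, c l m * c' r i *
      (∑ α, ∑ β, ∑ γ, ∑ α', ∑ β', ∑ γ',
        (h l α β * g m γ + h l β γ * g m α + h l γ α * g m β) * J α α' * J β β' * J γ γ' *
        (h r α' β' * g i γ' + h r β' γ' * g i α' + h r γ' α' * g i β')) = 0 := by
  -- Q l i r m
  set Q : κ → κ → κ → κ → ℝ := fun l i r m =>
    ∑ a, ∑ b, (∑ u, ∑ v, h l a u * J u v * g i v) * J a b *
      (∑ u, ∑ v, h r b u * J u v * g m v) with hQdef
  have hin : ∀ l m r i : κ,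
      (∑ α, ∑ β, ∑ γ, ∑ α', ∑ β', ∑ γ',
        (h l α β * g m γ + h l β γ * g m α + h l γ α * g m β) * J α α' * J β β' * J γ γ' *
        (h r α' β' * g i γ' + h r β' γ' * g i α' + h r γ' α' * g i β'))
      = -6 * Q l i r m := by
    intro l m r i
    rw [inner_reduce J hJ (h l) (h r) (g m) (g i) (hsym l) (hsym r), hP m i, hQdef]
    ring
  have hQswap : ∀ l m r i : κ, Q m r i l = - Q l i r m := by
    intro l m r i
    rw [hQdef]
    have e1 : ∀ a, (∑ u, ∑ v, h m a u * J u v * g r v) = ∑ u, ∑ v, h r a u * J u v * g m v :=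
      fun a => hM m r a
    have e2 : ∀ a, (∑ u, ∑ v, h i a u * J u v * g l v) = ∑ u, ∑ v, h l a u * J u v * g i v :=
      fun a => hM i l a
    calc (∑ a, ∑ b, (∑ u, ∑ v, h m a u * J u v * g r v) * J a b *
            (∑ u, ∑ v, h i b u * J u v * g l v))
        = ∑ a, ∑ b, (∑ u, ∑ v, h r a u * J u v * g m v) * J a b *
            (∑ u, ∑ v, h l b u * J u v * g i v) :=
          Finset.sum_congr rfl fun a _ => Finset.sum_congr rfl fun b _ => by
            rw [e1 a, e2 b]
      _ = -(∑ a, ∑ b, (∑ u, ∑ v, h l a u * J u v * g i v) * J a b *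
            (∑ u, ∑ v, h r b u * J u v * g m v)) :=
          flipJ J hJ (fun a => ∑ u, ∑ v, h r a u * J u v * g m v)
            (fun b => ∑ u, ∑ v, h l b u * J u v * g i v)
  -- T
  set T : ℝ := ∑ l, ∑ m, ∑ r, ∑ i, c l m * c' r i * Q l i r m with hTdef
  have hT : T = -T := by
    conv_lhs => rw [hTdef, Finset.sum_comm]
    have inner_swap : ∀ m l : κ, (∑ r, ∑ i, c l m * c' r i * Q l i r m)
        = ∑ i, ∑ r, c l m * c' r i * Q l i r m := fun m l => Finset.sum_comm
    calc (∑ m, ∑ l, ∑ r, ∑ i, c l m * c' r i * Q l i r m)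
        = ∑ m, ∑ l, ∑ i, ∑ r, c l m * c' r i * Q l i r m :=
          Finset.sum_congr rfl fun m _ => Finset.sum_congr rfl fun l _ => inner_swap m l
      _ = ∑ m, ∑ l, ∑ i, ∑ r, -(c m l * c' i r * Q m r i l) :=
          Finset.sum_congr rfl fun m _ => Finset.sum_congr rfl fun l _ =>
            Finset.sum_congr rfl fun i _ => Finset.sum_congr rfl fun r _ => by
              rw [hQswap m l i r, hc m l, hc' i r]; ring
      _ = -T := by
          simp only [Finset.sum_neg_distrib]; rfl
  have hT0 : T = 0 := by linarith
  calc (∑ l, ∑ m, ∑ r, ∑ i, c l m * c' r i *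
      (∑ α, ∑ β, ∑ γ, ∑ α', ∑ β', ∑ γ',
        (h l α β * g m γ + h l β γ * g m α + h l γ α * g m β) * J α α' * J β β' * J γ γ' *
        (h r α' β' * g i γ' + h r β' γ' * g i α' + h r γ' α' * g i β')))
      = ∑ l, ∑ m, ∑ r, ∑ i, (-6) * (c l m * c' r i * Q l i r m) :=
        Finset.sum_congr rfl fun l _ => Finset.sum_congr rfl fun m _ =>
          Finset.sum_congr rfl fun r _ => Finset.sum_congr rfl fun i _ => by
            rw [hin l m r i]; ring
    _ = (-6) * T := by rw [hTdef]; simp only [← Finset.mul_sum]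
    _ = 0 := by rw [hT0]; ring

end AuxAlgebra

section AuxCalc

lemma stdJ_antisymm (n : ℕ) : ∀ a b, stdJ n a b = - stdJ n b a := by
  rintro (a|a) (b|b) <;>
    simp [stdJ, Matrix.fromBlocks, Matrix.one_apply, eq_comm]

lemma d2_eq {n : ℕ} (A : ((Fin n ⊕ Fin n) → ℝ) → ℝ) (x : (Fin n ⊕ Fin n) → ℝ)
    (α β : Fin n ⊕ Fin n) :
    d2 A x α β = fderiv ℝ (fderiv ℝ A) x (Pi.single α 1) (Pi.single β 1) := by
  rw [d2, iteratedFDeriv_two_apply]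
  simp

lemma d2_symm {n : ℕ} {A : ((Fin n ⊕ Fin n) → ℝ) → ℝ} (hA : ContDiff ℝ (⊤ : ℕ∞) A)
    (x : (Fin n ⊕ Fin n) → ℝ) (α β : Fin n ⊕ Fin n) :
    d2 A x α β = d2 A x β α := by
  rw [d2_eq, d2_eq]
  exact (hA.contDiffAt.isSymmSndFDerivAt (by rw [minSmoothness_of_isRCLikeNormedField]; exact WithTop.coe_le_coe.mpr le_top)) _ _

-- derivative of pgrad
lemma hasFDerivAt_pgrad {n : ℕ} {A : ((Fin n ⊕ Fin n) → ℝ) → ℝ} (hA : ContDiff ℝ (⊤ : ℕ∞) A)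
    (x : (Fin n ⊕ Fin n) → ℝ) (α : Fin n ⊕ Fin n) :
    HasFDerivAt (fun y => pgrad A y α)
      ((ContinuousLinearMap.apply ℝ ℝ (Pi.single α 1 : (Fin n ⊕ Fin n) → ℝ)).comp
        (fderiv ℝ (fderiv ℝ A) x)) x := by
  have h1 : HasFDerivAt (fderiv ℝ A) (fderiv ℝ (fderiv ℝ A) x) x :=
    (((hA.fderiv_right (m := 1) (by exact WithTop.coe_le_coe.mpr le_top)).differentiable one_ne_zero) x).hasFDerivAt
  exact ((ContinuousLinearMap.apply ℝ ℝ
    (Pi.single α 1 : (Fin n ⊕ Fin n) → ℝ)).hasFDerivAt).comp x h1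

lemma bracket_deriv {n : ℕ} {A B : ((Fin n ⊕ Fin n) → ℝ) → ℝ}
    (hA : ContDiff ℝ (⊤ : ℕ∞) A) (hB : ContDiff ℝ (⊤ : ℕ∞) B) (hbr : pbracket A B = 0)
    (x : (Fin n ⊕ Fin n) → ℝ) (γ : Fin n ⊕ Fin n) :
    (∑ α, ∑ β, d2 A x γ α * stdJ n α β * pgrad B x β)
      = ∑ α, ∑ β, d2 B x γ α * stdJ n α β * pgrad A x β := by
  set e : (Fin n ⊕ Fin n) → ((Fin n ⊕ Fin n) → ℝ) := fun α => Pi.single α 1 with he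
  set LA : (Fin n ⊕ Fin n) → ((Fin n ⊕ Fin n) → ℝ) →L[ℝ] ℝ := fun α =>
    ((ContinuousLinearMap.apply ℝ ℝ (e α)).comp (fderiv ℝ (fderiv ℝ A) x)) with hLA
  set LB : (Fin n ⊕ Fin n) → ((Fin n ⊕ Fin n) → ℝ) →L[ℝ] ℝ := fun α =>
    ((ContinuousLinearMap.apply ℝ ℝ (e α)).comp (fderiv ℝ (fderiv ℝ B) x)) with hLB
  have hterm : ∀ α β, HasFDerivAt (fun y => pgrad A y α * stdJ n α β * pgrad B y β)
      ((pgrad A x α * stdJ n α β) • LB β + pgrad B x β • (stdJ n α β • LA α)) x :=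
    fun α β => ((hasFDerivAt_pgrad hA x α).mul_const (stdJ n α β)).mul
      (hasFDerivAt_pgrad hB x β)
  have hsum : HasFDerivAt (fun y => ∑ α, ∑ β, pgrad A y α * stdJ n α β * pgrad B y β)
      (∑ α, ∑ β, ((pgrad A x α * stdJ n α β) • LB β + pgrad B x β • (stdJ n α β • LA α))) x := by
    apply HasFDerivAt.fun_sum
    intro α _
    exact HasFDerivAt.fun_sum fun β _ => hterm α β
  have h0 : HasFDerivAt (pbracket A B) (0 : ((Fin n ⊕ Fin n) → ℝ) →L[ℝ] ℝ) x := by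
    rw [hbr]; exact hasFDerivAt_const 0 x
  have heq := hsum.unique h0
  have happ := congrArg (fun (L : ((Fin n ⊕ Fin n) → ℝ) →L[ℝ] ℝ) => L (e γ)) heq
  simp only [ContinuousLinearMap.sum_apply, ContinuousLinearMap.add_apply,
    ContinuousLinearMap.smul_apply, ContinuousLinearMap.coe_comp', Function.comp_apply,
    ContinuousLinearMap.apply_apply, smul_eq_mul, ContinuousLinearMap.zero_apply,
    hLA, hLB, he] at happ
  have happ' : (∑ α, ∑ β, (pgrad A x α * stdJ n α β * d2 B x γ β
      + d2 A x γ α * stdJ n α β * pgrad B x β)) = (0:ℝ) := by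
    refine Eq.trans (Finset.sum_congr rfl fun α _ => Finset.sum_congr rfl fun β _ => ?_) happ
    rw [d2_eq B x γ β, d2_eq A x γ α]; ring
  simp only [Finset.sum_add_distrib] at happ'
  have h1 : (∑ α, ∑ β, pgrad A x α * stdJ n α β * d2 B x γ β)
      = -(∑ α, ∑ β, d2 B x γ α * stdJ n α β * pgrad A x β) :=
    flipJ (fun a b => stdJ n a b) (fun a b => stdJ_antisymm n a b)
      (pgrad A x) (fun b => d2 B x γ b)
  linarith [happ', h1]

end AuxCalc

/-- `𝔖(D²s_l ⊗ Ds_m)·(J⊗J⊗J)·𝔖(D²s_r ⊗ Ds_i)` contracted with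
coefficients `c^{lm} c'^{ri}` symmetric in `(l,m)` and `(r,i)` vanishes when the
actions Poisson-commute. -/
theorem cyclic_tensor_contraction_vanishes (n : ℕ)
    (s : Fin n → ((Fin n ⊕ Fin n) → ℝ) → ℝ)
    (hs : ∀ j, ContDiff ℝ (⊤ : ℕ∞) (s j))
    (hinv : ∀ m i, pbracket (s m) (s i) = 0)
    (c c' : Fin n → Fin n → ℝ)
    (hc : ∀ l m, c l m = c m l) (hc' : ∀ r i, c' r i = c' i r) :
    ∀ x : (Fin n ⊕ Fin n) → ℝ,
      ∑ l, ∑ m, ∑ r, ∑ i, c l m * c' r i *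
        (∑ α, ∑ β, ∑ γ, ∑ α', ∑ β', ∑ γ',
          cycSym (s l) (s m) x α β γ * stdJ n α α' * stdJ n β β' * stdJ n γ γ' *
            cycSym (s r) (s i) x α' β' γ') = 0 := by
  intro x
  have hM : ∀ m i γ, (∑ a, ∑ b, d2 (s m) x γ a * stdJ n a b * pgrad (s i) x b)
      = ∑ a, ∑ b, d2 (s i) x γ a * stdJ n a b * pgrad (s m) x b :=
    fun m i γ => bracket_deriv (hs m) (hs i) (hinv m i) x γ
  have hP : ∀ m i, (∑ a, ∑ b, pgrad (s m) x a * stdJ n a b * pgrad (s i) x b) = 0 :=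
    fun m i => congrFun (hinv m i) x
  unfold cycSym
  exact keyAlg (fun a b => stdJ n a b) (fun a b => stdJ_antisymm n a b)
    (fun k α => pgrad (s k) x α) (fun k a b => d2 (s k) x a b)
    (fun k a b => d2_symm (hs k) x a b) hP hM c c' hc hc'
end
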